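/- arXiv:2009.03056 — 9 statements merged into one kernel-verified Lean document; each statement's English description precedes it below -/
import Mathlib

section
/- Let A be a finite subset of ℝ^m, a ∈ A, and P = conv(A). Then P equals the union over all affinely independent subsets B ⊆ A with a ∈ B and aff(B) = aff(A) of the sets conv(B). -/
open Set Filter Topology MeasureTheory ProbabilityTheory Pointwise

noncomputable section

/-- Coercion of an integer vector to a real vector. -/
def zc {m : ℕ} (x : Fin m → ℤ) : Fin m → ℝ := fun i => (x i : ℝ)

/-- Convex conical hull: all finite nonnegative real combinations of elements of `A`. -/
def coneHull {m : ℕ} (A : Set (Fin m → ℝ)) : Set (Fin m → ℝ) :=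
  { x | ∃ (s : Finset (Fin m → ℝ)) (w : (Fin m → ℝ) → ℝ),
      ↑s ⊆ A ∧ (∀ a ∈ s, 0 ≤ w a) ∧ x = ∑ a ∈ s, w a • a }

/-! If `x ∈ conv D` with `a ∈ D ⊆ A` and `D` of minimal size, then `D` is affinely independent:
an affine dependence on `D`, signed to have a nonpositive coefficient at `a`, can be subtracted
from convex weights of `x` until some weight other than that of `a` vanishes, which would shrink
`D`. An affinely independent subset of `A` is then enlarged inside `A`, by points outside its
affine span, until it spans `aff A`; its convex hull still contains `x`. -/

section AffineSpace

variable {k V P : Type*} [DivisionRing k] [AddCommGroup V] [Module k V] [AddTorsor V P]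

theorem AffineIndependent.insert_of_notMem_affineSpan {s : Set P} {p : P}
    (hs : AffineIndependent k ((↑) : s → P)) (hp : p ∉ affineSpan k s) :
    AffineIndependent k ((↑) : ↥(insert p s) → P) := by
  set i : ↥(insert p s) := ⟨p, mem_insert p s⟩
  have hne : ∀ x : ↥(insert p s), x ≠ i → (x : P) ∈ s :=
    fun x hx => x.2.resolve_left fun h => hx (Subtype.ext h)
  refine AffineIndependent.affineIndependent_of_notMem_span (i := i) ?_ ?_
  · exact hs.comp_embedding ⟨fun x : {x // x ≠ i} => ⟨x.1, hne x.1 x.2⟩, fun x y h => by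
      simpa [Subtype.ext_iff] using h⟩
  · exact fun h => hp (affineSpan_mono k (by rintro _ ⟨x, hx, rfl⟩; exact hne x hx) h)

theorem Finset.exists_affineIndependent_extension_affineSpan_eq {D A : Finset P}
    (hDA : D ⊆ A) (hD : AffineIndependent k ((↑) : D → P)) :
    ∃ B : Finset P, D ⊆ B ∧ B ⊆ A ∧ AffineIndependent k ((↑) : B → P) ∧
      affineSpan k (B : Set P) = affineSpan k (A : Set P) := by
  classical
  obtain ⟨B, hB, hmax⟩ := (A.powerset.filter fun B =>
      D ⊆ B ∧ AffineIndependent k ((↑) : B → P)).exists_max_image card ⟨D, by simp [hDA, hD]⟩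
  simp only [mem_filter, mem_powerset] at hB hmax
  obtain ⟨hBA, hDB, hBind⟩ := hB
  refine ⟨B, hDB, hBA, hBind, le_antisymm (affineSpan_mono k (by simpa using hBA)) ?_⟩
  rw [affineSpan_le]
  by_contra! hspan
  obtain ⟨p, hpA, hp⟩ := Set.not_subset.mp hspan
  have hpB : p ∉ B := fun h => hp (mem_affineSpan k h)
  have hins : AffineIndependent k ((↑) : ↥(insert p B) → P) := by
    have := hBind.insert_of_notMem_affineSpan hp
    rwa [← coe_insert] at this
  have := hmax (insert p B) ⟨insert_subset hpA hBA, hDB.trans (subset_insert p B), hins⟩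
  rw [card_insert_of_notMem hpB] at this
  omega

end AffineSpace

section Convex

variable {𝕜 E : Type*} [Field 𝕜] [LinearOrder 𝕜] [IsStrictOrderedRing 𝕜] [AddCommGroup E]
  [Module 𝕜 E]

theorem Caratheodory.exists_ne_mem_convexHull_erase [DecidableEq E] {t : Finset E}
    (h : ¬AffineIndependent 𝕜 ((↑) : t → E)) {a x : E} (hx : x ∈ convexHull 𝕜 (t : Set E)) :
    ∃ y ∈ t, y ≠ a ∧ x ∈ convexHull 𝕜 (t.erase y : Set E) := by
  rw [Finset.convexHull_eq] at hx
  obtain ⟨f, hf0, hf1, rfl⟩ := hx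
  obtain ⟨g, hgcomb, hgsum, hgne, hga⟩ : ∃ g : E → 𝕜, ∑ e ∈ t, g e • e = 0 ∧
      ∑ e ∈ t, g e = 0 ∧ (∃ e ∈ t, g e ≠ 0) ∧ g a ≤ 0 := by
    obtain ⟨g, hgcomb, hgsum, hgne⟩ := exists_nontrivial_relation_sum_zero_of_not_affine_ind h
    rcases le_total (g a) 0 with hga | hga
    · exact ⟨g, hgcomb, hgsum, hgne, hga⟩
    · refine ⟨-g, ?_, ?_, ?_, ?_⟩ <;> simp_all
  obtain ⟨i₀, hi₀, hmin⟩ := (t.filter (0 < g ·)).exists_min_image (fun e => f e / g e) <| by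
    obtain ⟨e, he, hge⟩ := Finset.exists_pos_of_sum_zero_of_exists_nonzero g hgsum hgne
    exact ⟨e, Finset.mem_filter.mpr ⟨he, hge⟩⟩
  simp only [Finset.mem_filter] at hi₀ hmin
  obtain ⟨hi₀t, hgi₀⟩ := hi₀
  refine ⟨i₀, hi₀t, fun h => by rw [h] at hgi₀; exact not_lt.mpr hga hgi₀, ?_⟩
  set r := f i₀ / g i₀
  have hr : 0 ≤ r := div_nonneg (hf0 i₀ hi₀t) hgi₀.le
  have hk : ∀ e ∈ t, 0 ≤ f e - r * g e := fun e he => by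
    rcases lt_or_ge 0 (g e) with hge | hge
    · exact sub_nonneg.mpr ((le_div_iff₀ hge).mp (hmin e ⟨he, hge⟩))
    · nlinarith [hf0 e he]
  have hki₀ : f i₀ - r * g i₀ = 0 := by simp [r, hgi₀.ne']
  have hksum : ∑ e ∈ t.erase i₀, (f e - r * g e) = 1 := by
    rw [Finset.sum_erase (f := fun e => f e - r * g e) t hki₀, Finset.sum_sub_distrib, hf1,
      ← Finset.mul_sum, hgsum]
    ring
  rw [Finset.convexHull_eq]
  refine ⟨fun e => f e - r * g e, fun e he => hk e (Finset.mem_of_mem_erase he), hksum, ?_⟩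
  rw [Finset.centerMass_eq_of_sum_1 _ _ hksum, Finset.centerMass_eq_of_sum_1 _ _ hf1,
    Finset.sum_erase _ (by simp [hki₀])]
  simp only [id, sub_smul, mul_smul, Finset.sum_sub_distrib, ← Finset.smul_sum, hgcomb,
    smul_zero, sub_zero]

theorem Finset.exists_affineIndependent_subset_mem_convexHull {A : Finset E}
    {a x : E} (ha : a ∈ A) (hx : x ∈ convexHull 𝕜 (A : Set E)) :
    ∃ D ⊆ A, a ∈ D ∧ AffineIndependent 𝕜 ((↑) : D → E) ∧ x ∈ convexHull 𝕜 (D : Set E) := by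
  classical
  obtain ⟨D, hD, hmin⟩ := (A.powerset.filter fun D : Finset E =>
      a ∈ D ∧ x ∈ convexHull 𝕜 (D : Set E)).exists_min_image card ⟨A, by simp [ha, hx]⟩
  simp only [mem_filter, mem_powerset] at hD hmin
  obtain ⟨hDA, haD, hxD⟩ := hD
  refine ⟨D, hDA, haD, by_contra fun hind => ?_, hxD⟩
  obtain ⟨y, hyD, hya, hxy⟩ := Caratheodory.exists_ne_mem_convexHull_erase hind hxD
  have := hmin (D.erase y) ⟨(erase_subset y D).trans hDA, mem_erase.mpr ⟨hya.symm, haD⟩, hxy⟩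
  exact (card_erase_lt_of_mem hyD).not_ge this

end Convex

/-- stellar decomposition of a polytope `conv(A)` into simplices
`conv(B)` with `a ∈ B ⊆ A`, `B` affinely independent and `aff(B) = aff(A)`. -/
theorem stmt0 {m : ℕ} (A : Finset (Fin m → ℝ)) (a : Fin m → ℝ) (ha : a ∈ A) :
    convexHull ℝ (A : Set (Fin m → ℝ)) =
      ⋃ (B : Finset (Fin m → ℝ)) (_ : B ⊆ A ∧ a ∈ B ∧
        AffineIndependent ℝ (fun p : {z // z ∈ B} => (p : Fin m → ℝ)) ∧
        affineSpan ℝ (B : Set (Fin m → ℝ)) = affineSpan ℝ (A : Set (Fin m → ℝ))),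
        convexHull ℝ (B : Set (Fin m → ℝ)) := by
  ext x
  simp only [mem_iUnion]
  constructor
  · intro hx
    obtain ⟨D, hDA, haD, hD, hxD⟩ := A.exists_affineIndependent_subset_mem_convexHull ha hx
    obtain ⟨B, hDB, hBA, hB, hspan⟩ :=
      Finset.exists_affineIndependent_extension_affineSpan_eq hDA hD
    exact ⟨B, ⟨hBA, hDB haD, hB, hspan⟩, convexHull_mono (by simpa using hDB) hxD⟩
  · rintro ⟨B, ⟨hBA, -⟩, hxB⟩
    exact convexHull_mono (by simpa using hBA) hxB
end
end

section
/- Let A be a finite subset of ℝ^m, 0 ≠ a ∈ A, and C = cone(A) the convex conical hull of A. If C is pointed (i.e., C ∩ (−C) = {0}), then C equals the union over all subsets B ⊆ A with a ∈ B that form a basis of lin(A), of the cones cone(B). -/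
open Set Filter Topology MeasureTheory ProbabilityTheory Pointwise

noncomputable section

/-!
Carathéodory's exchange argument for cones, run so that it never removes `a`. If the generators
`T ∋ a` of `x` are linearly dependent, pick a relation `∑ d b • b = 0`; pointedness rules out a
relation whose coefficients are all of one sign and nonzero at `a ≠ 0`, so `d` can be chosen with
`d a ≤ 0` and `d b > 0` somewhere. Subtracting the largest admissible multiple of the relation
from the weights of `x` kills the weight of some `b` with `d b > 0`, hence `b ≠ a`. Iterating
ends with a linearly independent `T' ∋ a`, which is then extended inside `A` to a basis of
`lin(A)`.
-/

lemma LinearIndepOn.exists_finset_extension {K V : Type*} [DivisionRing K] [AddCommGroup V]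
    [Module K V] {s t : Finset V} (hs : LinearIndepOn K id (s : Set V)) (hst : s ⊆ t) :
    ∃ b : Finset V, s ⊆ b ∧ b ⊆ t ∧ LinearIndepOn K id (b : Set V) ∧
      Submodule.span K (b : Set V) = Submodule.span K (t : Set V) := by
  obtain ⟨b, hbt, hsb, htb, hb⟩ := exists_linearIndepOn_id_extension hs (Finset.coe_subset.2 hst)
  lift b to Finset V using t.finite_toSet.subset hbt
  exact ⟨b, Finset.coe_subset.1 hsb, Finset.coe_subset.1 hbt, hb,
    le_antisymm (Submodule.span_mono hbt) (Submodule.span_le.2 htb)⟩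

namespace coneHull

variable {m : ℕ}

lemma mono {A B : Set (Fin m → ℝ)} (h : A ⊆ B) : coneHull A ⊆ coneHull B := by
  rintro x ⟨s, w, hs, hw, hx⟩
  exact ⟨s, w, hs.trans h, hw, hx⟩

lemma sum_mem {A : Set (Fin m → ℝ)} {T : Finset (Fin m → ℝ)} (hTA : (T : Set _) ⊆ A)
    {w : (Fin m → ℝ) → ℝ} (hw : ∀ b ∈ T, 0 ≤ w b) : ∑ b ∈ T, w b • b ∈ coneHull A :=
  ⟨T, w, hTA, hw, rfl⟩

lemma mem_finset_iff {T : Finset (Fin m → ℝ)} {x : Fin m → ℝ} :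
    x ∈ coneHull (T : Set (Fin m → ℝ)) ↔
      ∃ w : (Fin m → ℝ) → ℝ, (∀ b ∈ T, 0 ≤ w b) ∧ x = ∑ b ∈ T, w b • b := by
  classical
  refine ⟨?_, fun ⟨w, hw, hx⟩ => hx ▸ sum_mem subset_rfl hw⟩
  rintro ⟨s, w, hs, hw, rfl⟩
  refine ⟨(s : Set (Fin m → ℝ)).indicator w, fun b _ => ?_, ?_⟩
  · by_cases hb : b ∈ s <;> simp [hb, hw]
  · rw [← Finset.sum_subset (Finset.coe_subset.1 hs) fun b _ hb => by simp [hb]]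
    exact Finset.sum_congr rfl fun b hb => by simp [hb]

variable {A T : Finset (Fin m → ℝ)} {a : Fin m → ℝ}

/-- In a pointed cone, each term of a nonnegative relation vanishes: it lies in the cone, and so
does its negative, the sum of the other terms. -/
lemma smul_eq_zero_of_pointed
    (hpt : coneHull (A : Set (Fin m → ℝ)) ∩ (-(coneHull (A : Set (Fin m → ℝ)))) = {0})
    (hTA : T ⊆ A) {c : (Fin m → ℝ) → ℝ} (hc : ∀ b ∈ T, 0 ≤ c b)
    (hrel : ∑ b ∈ T, c b • b = 0) {b : Fin m → ℝ} (hb : b ∈ T) : c b • b = 0 := by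
  classical
  have hterm : c b • b ∈ coneHull (A : Set (Fin m → ℝ)) := by
    simpa using sum_mem (T := {b}) (by simpa using hTA hb) (by simpa using hc b hb)
  have hrest : ∑ b' ∈ T.erase b, c b' • b' ∈ coneHull (A : Set (Fin m → ℝ)) :=
    sum_mem (by exact_mod_cast (T.erase_subset b).trans hTA)
      fun b' hb' => hc b' (Finset.mem_of_mem_erase hb')
  have hneg : -(c b • b) = ∑ b' ∈ T.erase b, c b' • b' := by
    rw [neg_eq_iff_add_eq_zero]
    exact (T.add_sum_erase (fun b' => c b' • b') hb).trans hrel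
  have : c b • b ∈ coneHull (A : Set (Fin m → ℝ)) ∩ (-(coneHull (A : Set (Fin m → ℝ)))) :=
    ⟨hterm, by rw [Set.mem_neg, hneg]; exact hrest⟩
  simpa [hpt] using this

lemma exists_relation_of_not_linearIndepOn
    (hpt : coneHull (A : Set (Fin m → ℝ)) ∩ (-(coneHull (A : Set (Fin m → ℝ)))) = {0})
    (hTA : T ⊆ A) (haT : a ∈ T) (ha0 : a ≠ 0) (hdep : ¬LinearIndepOn ℝ id (T : Set (Fin m → ℝ))) :
    ∃ d : (Fin m → ℝ) → ℝ, ∑ b ∈ T, d b • b = 0 ∧ d a ≤ 0 ∧ ∃ b ∈ T, 0 < d b := by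
  obtain ⟨c, hrel, b₀, hb₀, hcb₀⟩ := not_linearIndepOn_finset_iff.1 hdep
  simp only [id] at hrel
  have hrel_neg : ∑ b ∈ T, (-c) b • b = 0 := by simp [neg_smul, hrel]
  obtain ⟨d, hdrel, hda, hdb₀⟩ : ∃ d : (Fin m → ℝ) → ℝ,
      ∑ b ∈ T, d b • b = 0 ∧ d a ≤ 0 ∧ d b₀ ≠ 0 := by
    rcases le_or_gt (c a) 0 with h | h
    · exact ⟨c, hrel, h, hcb₀⟩
    · exact ⟨-c, hrel_neg, by simp [h.le], by simpa using hcb₀⟩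
  by_cases hpos : ∃ b ∈ T, 0 < d b
  · exact ⟨d, hdrel, hda, hpos⟩
  -- Otherwise `-d ≥ 0`, so pointedness forces `d a = 0` and `-d` is the relation we want.
  push Not at hpos
  have hnonneg : ∀ b ∈ T, 0 ≤ (-d) b := fun b hb => by simpa using hpos b hb
  have hrel' : ∑ b ∈ T, (-d) b • b = 0 := by simp [neg_smul, hdrel]
  have hda0 : d a = 0 := by
    simpa [ha0] using smul_eq_zero_of_pointed hpt hTA hnonneg hrel' haT
  exact ⟨-d, hrel', by simp [hda0], b₀, hb₀, by
    simpa using lt_of_le_of_ne (hpos b₀ hb₀) hdb₀⟩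

lemma exists_mem_coneHull_erase {x : Fin m → ℝ} (hx : x ∈ coneHull (T : Set (Fin m → ℝ)))
    {d : (Fin m → ℝ) → ℝ} (hrel : ∑ b ∈ T, d b • b = 0) (hpos : ∃ b ∈ T, 0 < d b) :
    ∃ b ∈ T, 0 < d b ∧ x ∈ coneHull ((T.erase b : Finset _) : Set (Fin m → ℝ)) := by
  classical
  obtain ⟨w, hw, rfl⟩ := mem_finset_iff.1 hx
  set P := T.filter fun b => 0 < d b
  obtain ⟨b, hbP, hmin⟩ := P.exists_min_image (fun b => w b / d b)
    (let ⟨b, hb, hdb⟩ := hpos; ⟨b, Finset.mem_filter.2 ⟨hb, hdb⟩⟩)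
  obtain ⟨hbT, hdb⟩ := Finset.mem_filter.1 hbP
  set t := w b / d b
  have ht : 0 ≤ t := div_nonneg (hw b hbT) hdb.le
  have hw' : ∀ b' ∈ T, 0 ≤ w b' - t * d b' := by
    intro b' hb'
    rcases le_or_gt (d b') 0 with hd | hd
    · nlinarith [hw b' hb']
    · have := hmin b' (Finset.mem_filter.2 ⟨hb', hd⟩)
      rw [le_div_iff₀ hd] at this
      linarith
  have hsum : ∑ b' ∈ T, w b' • b' = ∑ b' ∈ T, (w b' - t * d b') • b' := by
    simp only [sub_smul, Finset.sum_sub_distrib, mul_smul, ← Finset.smul_sum, hrel, smul_zero,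
      sub_zero]
  refine ⟨b, hbT, hdb, mem_finset_iff.2 ⟨fun b' => w b' - t * d b',
    fun b' hb' => hw' b' (Finset.mem_of_mem_erase hb'), ?_⟩⟩
  rw [hsum, Finset.sum_erase T (by simp [t, div_mul_cancel₀ _ hdb.ne'])]

lemma exists_linearIndepOn_subset_mem
    (hpt : coneHull (A : Set (Fin m → ℝ)) ∩ (-(coneHull (A : Set (Fin m → ℝ)))) = {0})
    (ha0 : a ≠ 0) {x : Fin m → ℝ} :
    ∀ T ⊆ A, a ∈ T → x ∈ coneHull (T : Set (Fin m → ℝ)) →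
      ∃ T' ⊆ T, a ∈ T' ∧ LinearIndepOn ℝ id (T' : Set (Fin m → ℝ)) ∧
        x ∈ coneHull (T' : Set (Fin m → ℝ)) := by
  classical
  intro T
  induction T using Finset.strongInduction with
  | H T ih =>
    intro hTA haT hx
    by_cases hind : LinearIndepOn ℝ id (T : Set (Fin m → ℝ))
    · exact ⟨T, subset_rfl, haT, hind, hx⟩
    obtain ⟨d, hrel, hda, hpos⟩ := exists_relation_of_not_linearIndepOn hpt hTA haT ha0 hind
    obtain ⟨b, hbT, hdb, hxb⟩ := exists_mem_coneHull_erase hx hrel hpos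
    have hab : a ≠ b := by rintro rfl; linarith
    obtain ⟨T', hT', haT', hind', hx'⟩ := ih (T.erase b) (Finset.erase_ssubset hbT)
      ((T.erase_subset b).trans hTA) (Finset.mem_erase.2 ⟨hab, haT⟩) hxb
    exact ⟨T', hT'.trans (T.erase_subset b), haT', hind', hx'⟩

end coneHull

/-- a pointed finitely generated cone is the union of the simplicial
cones `cone(B)` over subsets `B ⊆ A` containing `a` which are bases of `lin(A)`. -/
theorem stmt1 {m : ℕ} (A : Finset (Fin m → ℝ)) (a : Fin m → ℝ) (ha : a ∈ A) (ha0 : a ≠ 0)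
    (hpointed : coneHull (A : Set (Fin m → ℝ)) ∩ (-(coneHull (A : Set (Fin m → ℝ)))) = {0}) :
    coneHull (A : Set (Fin m → ℝ)) =
      ⋃ (B : Finset (Fin m → ℝ)) (_ : B ⊆ A ∧ a ∈ B ∧
        LinearIndependent ℝ (fun p : {z // z ∈ B} => (p : Fin m → ℝ)) ∧
        Submodule.span ℝ (B : Set (Fin m → ℝ)) = Submodule.span ℝ (A : Set (Fin m → ℝ))),
        coneHull (B : Set (Fin m → ℝ)) := by
  refine Set.Subset.antisymm (fun x hx => ?_) ?_
  · obtain ⟨T, hTA, haT, hT, hxT⟩ :=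
      coneHull.exists_linearIndepOn_subset_mem hpointed ha0 A subset_rfl ha hx
    obtain ⟨B, hTB, hBA, hB, hspan⟩ := hT.exists_finset_extension hTA
    exact Set.mem_biUnion (x := B) ⟨hBA, hTB haT, hB, hspan⟩
      (coneHull.mono (Finset.coe_subset.2 hTB) hxT)
  · simp only [Set.iUnion_subset_iff]
    exact fun B hB => coneHull.mono (Finset.coe_subset.2 hB.1)
end
end

section
/- Let A be a finite subset of ℝ^m, C = cone(A), L₀ = C ∩ (−C) its lineality space, and A₀ = {x ∈ A : −x ∈ C}. Then L₀ = cone(A₀) = lin(A₀). -/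
/-!
The lineality space `L = C ∩ -C` of a cone `C` is a face of `C`: whenever a positive combination of
points of `C` lies in `L`, so does each of these points. Writing `x ∈ L` as a positive combination
of generators from `A` therefore puts every generator used into `A ∩ L = A₀`, whence
`L = cone(A₀)`. Since `L` is a linear subspace, the conical hull of `A₀` is closed under
negation and so equals `lin(A₀)`.
-/

open Set Filter Topology MeasureTheory ProbabilityTheory Pointwise

noncomputable section

namespace PointedCone

variable {R E : Type*} [AddCommGroup E]

section OrderedSemiring

variable [Semiring R] [PartialOrder R] [IsOrderedRing R] [Module R E]

theorem IsFaceOf.eq_hull_inter {s : Set E} {F : PointedCone R E} (hF : F.IsFaceOf (hull R s)) :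
    F = hull R (s ∩ F) := by
  classical
  refine le_antisymm (fun x hxF => ?_) (Submodule.span_le.mpr inter_subset_right)
  obtain ⟨c, hcs, hc, rfl⟩ := mem_hull_set.mp (hF.le hxF)
  refine Submodule.sum_mem _ fun a ha => smul_mem _ (hc a) (subset_hull ⟨hcs ha, ?_⟩)
  have hrest : ∑ b ∈ c.support.erase a, c b • b ∈ hull R s :=
    Submodule.sum_mem _ fun b hb =>
      smul_mem _ (hc b) (subset_hull (hcs (Finset.mem_of_mem_erase hb)))
  refine hF.mem_of_smul_add_mem (subset_hull (hcs ha)) hrest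
    ((hc a).lt_of_ne (Finsupp.mem_support_iff.mp ha).symm) ?_
  rwa [Finset.add_sum_erase _ (fun b => c b • b) ha]

theorem hull_eq_span_of_eq_submodule {s : Set E} {L : Submodule R E}
    (h : hull R s = L) : hull R s = Submodule.span R s := by
  refine le_antisymm (hull_le_span R s) ?_
  rw [h]
  refine Submodule.span_le.mpr ?_
  rw [← coe_ofSubmodule, ← h]
  exact subset_hull

end OrderedSemiring

variable [DivisionRing R] [LinearOrder R] [IsOrderedRing R] [Module R E]

theorem lineal_hull (s : Set E) :
    (hull R s).lineal = hull R {x ∈ s | -x ∈ hull R s} := by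
  rw [(IsFaceOf.lineal (hull R s)).eq_hull_inter]
  congr 1
  ext x
  simpa using fun hx _ => subset_hull hx

end PointedCone

theorem coneHull_eq_hull {m : ℕ} (A : Set (Fin m → ℝ)) :
    coneHull A = PointedCone.hull ℝ A := by
  ext x
  constructor
  · rintro ⟨s, w, hs, hw, rfl⟩
    exact Submodule.sum_mem _ fun a ha =>
      PointedCone.smul_mem _ (hw a ha) (PointedCone.subset_hull (hs ha))
  · intro hx
    obtain ⟨c, hcA, hc, rfl⟩ := PointedCone.mem_hull_set.mp hx
    exact ⟨c.support, c, hcA, fun a _ => hc a, rfl⟩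

/-- the lineality space `C ∩ (−C)` of `C = cone(A)` equals
`cone(A₀) = lin(A₀)` where `A₀ = {x ∈ A : −x ∈ C}`. -/
theorem stmt2 {m : ℕ} (A : Finset (Fin m → ℝ)) :
    coneHull (A : Set (Fin m → ℝ)) ∩ (-(coneHull (A : Set (Fin m → ℝ)))) =
      coneHull {x ∈ (A : Set (Fin m → ℝ)) | -x ∈ coneHull (A : Set (Fin m → ℝ))} ∧
    coneHull {x ∈ (A : Set (Fin m → ℝ)) | -x ∈ coneHull (A : Set (Fin m → ℝ))} =
      (Submodule.span ℝ {x ∈ (A : Set (Fin m → ℝ)) | -x ∈ coneHull (A : Set (Fin m → ℝ))} :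
        Set (Fin m → ℝ)) := by
  have hlineal := PointedCone.lineal_hull (R := ℝ) (A : Set (Fin m → ℝ))
  rw [coneHull_eq_hull, coneHull_eq_hull]
  constructor
  · refine Eq.trans ?_ (congrArg SetLike.coe hlineal)
    ext x
    simp
  · exact congrArg SetLike.coe (PointedCone.hull_eq_span_of_eq_submodule hlineal.symm)
end
end

section
/- For any finite set A ⊆ ℤ^m there exists a natural number d ≥ 1 such that d·x ∈ sg(A) for every x ∈ cone(A) ∩ ℤ^m, where sg(A) = ℤ₊a₁ + ⋯ + ℤ₊a_k is the semigroup generated by A and cone(A) is the convex conical hull of A in ℝ^m. -/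
/-!
By the conic version of Carathéodory's theorem, an integer point `x` of `cone(A)` is a nonnegative
real combination `x = B c` of the vectors of some `T ⊆ A` that are linearly independent, stored as
the columns of an integer matrix `B`. Then `c` solves the normal equations `(Bᵀ B) c = Bᵀ x`, whose
integer matrix `Bᵀ B` is positive definite, so by Cramer's rule `det (Bᵀ B) • c` is a nonnegative
integer vector and `det (Bᵀ B) • x ∈ sg(T)`. The product of these multipliers over all `T ⊆ A`
works for every `x`.
-/

open Set Filter Topology MeasureTheory ProbabilityTheory Pointwise

noncomputable section

section Caratheodory

variable {𝕜 V ι : Type*} [Field 𝕜] [LinearOrder 𝕜] [IsStrictOrderedRing 𝕜]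
  [AddCommGroup V] [Module 𝕜 V] {v : ι → V} {s : Finset ι} {w : ι → 𝕜}

theorem exists_sum_erase_smul_eq_of_not_linearIndepOn [DecidableEq ι]
    (hs : ¬LinearIndepOn 𝕜 v s) (hw : ∀ i ∈ s, 0 ≤ w i) :
    ∃ j ∈ s, ∃ u : ι → 𝕜, (∀ i ∈ s.erase j, 0 ≤ u i) ∧
      ∑ i ∈ s.erase j, u i • v i = ∑ i ∈ s, w i • v i := by
  obtain ⟨f, hf, hpos⟩ : ∃ f : ι → 𝕜, ∑ i ∈ s, f i • v i = 0 ∧ ∃ i ∈ s, 0 < f i := by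
    obtain ⟨f, hf, i, hi, hfi⟩ := not_linearIndepOn_finset_iff.mp hs
    rcases hfi.lt_or_gt with hneg | hpos
    · exact ⟨-f, by simp [hf], i, hi, by simpa using hneg⟩
    · exact ⟨f, hf, i, hi, hpos⟩
  -- Move along the relation `f` until the first coefficient of `w - t • f` vanishes.
  have hP : (s.filter (0 < f ·)).Nonempty := by simpa [Finset.filter_nonempty_iff] using hpos
  obtain ⟨j, hjP, hj⟩ := (s.filter (0 < f ·)).exists_min_image (fun i => w i / f i) hP
  obtain ⟨hjs, hfj⟩ := Finset.mem_filter.mp hjP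
  set t := w j / f j
  have ht : 0 ≤ t := div_nonneg (hw j hjs) hfj.le
  have hu : ∀ i ∈ s, 0 ≤ w i - t * f i := by
    intro i hi
    rcases le_or_gt (f i) 0 with hfi | hfi
    · nlinarith [hw i hi]
    · exact sub_nonneg.mpr ((le_div_iff₀ hfi).mp (hj i (Finset.mem_filter.mpr ⟨hi, hfi⟩)))
  refine ⟨j, hjs, fun i => w i - t * f i, fun i hi => hu i (Finset.mem_of_mem_erase hi), ?_⟩
  rw [Finset.sum_erase _ (by simp [t, hfj.ne'])]
  simp only [sub_smul, mul_smul, Finset.sum_sub_distrib, ← Finset.smul_sum, hf, smul_zero,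
    sub_zero]

theorem exists_linearIndepOn_subset_sum_smul_eq (hw : ∀ i ∈ s, 0 ≤ w i) :
    ∃ t ⊆ s, LinearIndepOn 𝕜 v t ∧ ∃ u : ι → 𝕜, (∀ i ∈ t, 0 ≤ u i) ∧
      ∑ i ∈ t, u i • v i = ∑ i ∈ s, w i • v i := by
  classical
  induction s using Finset.strongInduction generalizing w with
  | H s ih =>
    by_cases hs : LinearIndepOn 𝕜 v s
    · exact ⟨s, subset_rfl, hs, w, hw, rfl⟩
    obtain ⟨j, hj, u, hu, hsum⟩ := exists_sum_erase_smul_eq_of_not_linearIndepOn hs hw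
    obtain ⟨t, hts, ht, u', hu', hsum'⟩ := ih _ (Finset.erase_ssubset hj) hu
    exact ⟨t, hts.trans (Finset.erase_subset j s), ht, u', hu', hsum'.trans hsum⟩

end Caratheodory

namespace Matrix

variable {ι n : Type*} [Fintype ι] [DecidableEq ι]

theorem map_det_smul_eq_of_map_mulVec_eq {R S : Type*} [CommRing R] [CommRing S] (f : R →+* S)
    {G : Matrix ι ι R} {b : ι → R} {c : ι → S} (h : G.map f *ᵥ c = f ∘ b) :
    f G.det • c = f ∘ (G.adjugate *ᵥ b) := by
  funext i
  rw [Function.comp_apply, RingHom.map_mulVec, ← RingHom.mapMatrix_apply, f.map_adjugate,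
    RingHom.mapMatrix_apply, ← h, mulVec_mulVec, adjugate_mul, f.map_det, smul_mulVec,
    one_mulVec]
  rfl

variable [Fintype n]

theorem det_transpose_mul_self_pos {B : Matrix n ι ℝ} (hB : LinearIndependent ℝ B.col) :
    0 < (Bᵀ * B).det :=
  (PosDef.conjTranspose_mul_self B (mulVec_injective_iff.mpr hB)).det_pos

theorem exists_nsmul_eq_mulVec_of_linearIndependent_col (B : Matrix n ι ℤ)
    (hB : LinearIndependent ℝ (B.map (Int.cast : ℤ → ℝ)).col) :
    ∃ k : ℕ, 0 < k ∧ ∀ (x : n → ℤ) (c : ι → ℝ), 0 ≤ c →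
      B.map (Int.cast : ℤ → ℝ) *ᵥ c = Int.cast ∘ x → ∃ N : ι → ℕ, k • x = B *ᵥ (Nat.cast ∘ N) := by
  set f := Int.castRingHom ℝ
  set G := Bᵀ * B
  have hG : G.map f = (B.map f)ᵀ * B.map f := by
    rw [Matrix.map_mul, transpose_map]
  have hdet : 0 < G.det := by
    have : 0 < f G.det := by
      rw [f.map_det, RingHom.mapMatrix_apply, hG]
      exact det_transpose_mul_self_pos hB
    exact Int.cast_pos.mp this
  refine ⟨G.det.toNat, by omega, fun x c hc hx => ?_⟩
  replace hx : B.map f *ᵥ c = f ∘ x := hx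
  set M := G.adjugate *ᵥ (Bᵀ *ᵥ x)
  -- Cramer's rule for the normal equations `G c = Bᵀ x` makes `det G • c` integral.
  have hcramer : f G.det • c = f ∘ M := by
    apply map_det_smul_eq_of_map_mulVec_eq
    funext i
    rw [hG, ← mulVec_mulVec, hx, Function.comp_apply, RingHom.map_mulVec, transpose_map]
  have hM : ∀ i, 0 ≤ M i := fun i => by
    have : 0 ≤ f (M i) := by
      rw [← Function.comp_apply (f := f), ← hcramer]
      exact mul_nonneg (Int.cast_nonneg_iff.mpr hdet.le) (hc i)
    exact Int.cast_nonneg_iff.mp this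
  refine ⟨fun i => (M i).toNat, ?_⟩
  have hN : (Nat.cast ∘ fun i => (M i).toNat : ι → ℤ) = M :=
    funext fun i => Int.toNat_of_nonneg (hM i)
  rw [hN, ← natCast_zsmul, Int.toNat_of_nonneg hdet.le]
  funext r
  apply Int.cast_injective (α := ℝ)
  calc f ((G.det • x) r) = (B.map f *ᵥ (f G.det • c)) r := by
        rw [mulVec_smul, Pi.smul_apply, hx]; simp [f]
    _ = f ((B *ᵥ M) r) := by rw [hcramer, RingHom.map_mulVec]

end Matrix

open Matrix

section IntegerCone

variable {m : ℕ}

theorem zc_injective : Function.Injective (zc (m := m)) :=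
  fun _ _ h => funext fun i => Int.cast_injective (congrFun h i)

theorem exists_linearIndepOn_of_zc_mem_coneHull {A : Finset (Fin m → ℤ)} {x : Fin m → ℤ}
    (hx : zc x ∈ coneHull (zc '' (A : Set (Fin m → ℤ)))) :
    ∃ T ⊆ A, LinearIndepOn ℝ zc (T : Set (Fin m → ℤ)) ∧ ∃ c : (Fin m → ℤ) → ℝ,
      (∀ a ∈ T, 0 ≤ c a) ∧ ∑ a ∈ T, c a • zc a = zc x := by
  classical
  obtain ⟨s, w, hsA, hw, hxs⟩ := hx
  set S := A.filter (zc · ∈ s)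
  have hS : S.image zc = s := by
    ext y
    simp only [Finset.mem_image, Finset.mem_filter, S]
    constructor
    · rintro ⟨a, ⟨-, ha⟩, rfl⟩
      exact ha
    · intro hy
      obtain ⟨a, ha, rfl⟩ := hsA hy
      exact ⟨a, ⟨ha, hy⟩, rfl⟩
  obtain ⟨T, hTS, hT, c, hc, hsum⟩ := exists_linearIndepOn_subset_sum_smul_eq (v := zc) (s := S)
    (w := w ∘ zc) fun a ha => hw _ (Finset.mem_filter.mp ha).2
  refine ⟨T, hTS.trans (Finset.filter_subset _ _), hT, c, hc, ?_⟩
  rw [hsum, hxs, ← hS, Finset.sum_image fun a _ b _ h => zc_injective h]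
  rfl

theorem exists_nsmul_mem_closure_of_linearIndepOn {T : Finset (Fin m → ℤ)}
    (hT : LinearIndepOn ℝ zc (T : Set (Fin m → ℤ))) :
    ∃ k : ℕ, 0 < k ∧ ∀ (x : Fin m → ℤ) (c : (Fin m → ℤ) → ℝ), (∀ a ∈ T, 0 ≤ c a) →
      ∑ a ∈ T, c a • zc a = zc x → k • x ∈ AddSubmonoid.closure (T : Set (Fin m → ℤ)) := by
  classical
  let B : Matrix (Fin m) T ℤ := Matrix.of fun r a => a.1 r
  obtain ⟨k, hk, hB⟩ := B.exists_nsmul_eq_mulVec_of_linearIndependent_col hT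
  refine ⟨k, hk, fun x c hc hcx => ?_⟩
  obtain ⟨N, hN⟩ := hB x (fun a => c a) (fun a => hc a a.2) (by
    change _ = zc x
    rw [← hcx, ← Finset.sum_coe_sort T]
    funext r
    simp [B, mulVec, dotProduct, zc, mul_comm])
  have hN' : B *ᵥ (Nat.cast ∘ N) = ∑ a : T, N a • a.1 := by
    funext r
    simp [B, mulVec, dotProduct, mul_comm]
  rw [hN, hN']
  exact AddSubmonoid.sum_mem _ fun a _ => nsmul_mem (AddSubmonoid.subset_closure a.2) _

end IntegerCone

/-- for a finite `A ⊆ ℤ^m` there is `d ≥ 1` with `d·x ∈ sg(A)` for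
every integer point `x` of `cone(A)`. -/
theorem stmt3 {m : ℕ} (A : Finset (Fin m → ℤ)) :
    ∃ d : ℕ, 1 ≤ d ∧ ∀ x : Fin m → ℤ,
      zc x ∈ coneHull (zc '' (A : Set (Fin m → ℤ))) →
      (d : ℤ) • x ∈ AddSubmonoid.closure (A : Set (Fin m → ℤ)) := by
  have hk (T : Finset (Fin m → ℤ)) : ∃ k : ℕ, 0 < k ∧ (LinearIndepOn ℝ zc (T : Set (Fin m → ℤ)) →
      ∀ (x : Fin m → ℤ) (c : (Fin m → ℤ) → ℝ), (∀ a ∈ T, 0 ≤ c a) →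
        ∑ a ∈ T, c a • zc a = zc x → k • x ∈ AddSubmonoid.closure (T : Set (Fin m → ℤ))) := by
    by_cases hT : LinearIndepOn ℝ zc (T : Set (Fin m → ℤ))
    · obtain ⟨k, hk, h⟩ := exists_nsmul_mem_closure_of_linearIndepOn hT
      exact ⟨k, hk, fun _ => h⟩
    · exact ⟨1, one_pos, (absurd · hT)⟩
  choose k hk_pos hk using hk
  refine ⟨∏ T ∈ A.powerset, k T, Finset.prod_pos fun T _ => hk_pos T, fun x hx => ?_⟩
  obtain ⟨T, hTA, hT, c, hc, hcx⟩ := exists_linearIndepOn_of_zc_mem_coneHull hx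
  obtain ⟨r, hr⟩ := Finset.dvd_prod_of_mem k (Finset.mem_powerset.mpr hTA)
  rw [natCast_zsmul, hr, mul_comm, mul_smul]
  exact nsmul_mem (AddSubmonoid.closure_mono (by simpa using hTA) (hk T hT x c hc hcx)) r
end
end

section
/- Let S ⊆ ℤ^m be a vector semigroup (nonempty and closed under addition), O = rint(cone(S)) its asymptotic cone, L = lin(S), and S* = ⋃_{n≥1} S/n. Then every x ∈ O lies in the relative interior of some L-simplex all of whose vertices belong to S*. -/
/-!
Choose a basis `b` of `L = lin S` inside `S`. Since `S*` is closed under addition and under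
positive rational scaling, its closure contains `cone S`. As `x` is relatively interior,
`x - τ ∑ b_j` still lies in `cone S` for a small `τ > 0`, so some `p ∈ S*` close to it leaves
`x - p` with strictly positive `b`-coordinates. For a large integer `K`, the points `p` and
`p + K b_j` lie in `S*` and span an `L`-simplex in which `x` has strictly positive barycentric
coordinates.
-/

open Set Filter Topology MeasureTheory ProbabilityTheory Pointwise

noncomputable section

/-- `S* = ⋃_{n ≥ 1} S/n`, viewed inside `ℝ^m`. -/
def Sstar {m : ℕ} (S : Set (Fin m → ℤ)) : Set (Fin m → ℝ) :=
  {x | ∃ n : ℕ, 0 < n ∧ ∃ s ∈ S, (n : ℝ) • x = zc s}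

open Submodule (span)

section IntrinsicInterior

variable {𝕜 V P : Type*} [Ring 𝕜] [AddCommGroup V] [Module 𝕜 V] [TopologicalSpace P]
  [AddTorsor V P]

theorem mem_intrinsicInterior_iff_exists_isOpen {s : Set P} {x : P} :
    x ∈ intrinsicInterior 𝕜 s ↔
      x ∈ s ∧ ∃ W : Set P, IsOpen W ∧ x ∈ W ∧ W ∩ (affineSpan 𝕜 s : Set P) ⊆ s := by
  constructor
  · rintro ⟨y, hy, rfl⟩
    obtain ⟨U, hUs, hUo, hyU⟩ := mem_interior.1 hy
    obtain ⟨W, hWo, rfl⟩ := isOpen_induced_iff.1 hUo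
    exact ⟨hUs hyU, W, hWo, hyU,
      fun z ⟨hzW, hzs⟩ => hUs (show (⟨z, hzs⟩ : affineSpan 𝕜 s) ∈ _ from hzW)⟩
  · rintro ⟨hxs, W, hWo, hxW, hWs⟩
    exact ⟨⟨x, subset_affineSpan 𝕜 s hxs⟩,
      mem_interior.2 ⟨_, fun z hz => hWs ⟨hz, z.2⟩, hWo.preimage continuous_subtype_val, hxW⟩,
      rfl⟩

end IntrinsicInterior

theorem nsmul_mem_of_add_mem {M : Type*} [AddMonoid M] {T : Set M}
    (hT : ∀ a ∈ T, ∀ b ∈ T, a + b ∈ T) {a : M} (ha : a ∈ T) {n : ℕ} (hn : n ≠ 0) :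
    n • a ∈ T := by
  induction n with
  | zero => exact absurd rfl hn
  | succ n ih =>
    rcases eq_or_ne n 0 with rfl | hn'
    · simpa using ha
    · rw [succ_nsmul]
      exact hT _ (ih hn') _ ha

theorem exists_linearIndependent_fin {K V : Type*} [DivisionRing K] [AddCommGroup V]
    [Module K V] [FiniteDimensional K V] (T : Set V) :
    ∃ (d : ℕ) (b : Fin d → V), LinearIndependent K b ∧ range b ⊆ T ∧
      span K (range b) = span K T := by
  obtain ⟨B, hBT, hBspan, hB⟩ := exists_linearIndependent K T
  obtain ⟨d, b, hb, rfl⟩ := hB.setFinite.fin_param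
  exact ⟨d, b, (linearIndepOn_id_range_iff hb).1 hB, hBT, hBspan⟩

section CornerSimplex

variable {k V : Type*} [Ring k] [AddCommGroup V] [Module k V] {d : ℕ}

def cornerSimplex (p : V) (e : Fin d → V) : Fin (d + 1) → V :=
  Fin.cons p fun j => p + e j

@[simp] theorem cornerSimplex_succ (p : V) (e : Fin d → V) (j : Fin d) :
    cornerSimplex p e j.succ = p + e j := rfl

theorem cornerSimplex_sub_apply_zero (p : V) (e : Fin d → V) :
    (fun i => cornerSimplex p e i - cornerSimplex p e 0) = Fin.cons 0 e := by
  funext i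
  refine Fin.cases ?_ (fun j => ?_) i <;> simp [cornerSimplex]

theorem affineIndependent_cornerSimplex (p : V) {e : Fin d → V}
    (he : LinearIndependent k e) : AffineIndependent k (cornerSimplex p e) := by
  rw [affineIndependent_iff_linearIndependent_vsub k _ 0,
    ← linearIndependent_equiv (finSuccAboveEquiv 0)]
  convert he
  funext j
  simp [cornerSimplex, finSuccAboveEquiv_apply]

theorem affineSpan_cornerSimplex (p : V) (e : Fin d → V) :
    affineSpan k (range (cornerSimplex p e)) = AffineSubspace.mk' p (span k (range e)) := by
  refine AffineSubspace.ext_of_direction_eq ?_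
    ⟨p, mem_affineSpan k (mem_range_self 0), AffineSubspace.self_mem_mk' _ _⟩
  rw [direction_affineSpan, AffineSubspace.direction_mk',
    vectorSpan_range_eq_span_range_vsub_right k _ 0]
  simp only [vsub_eq_sub, cornerSimplex_sub_apply_zero, Fin.range_cons,
    Submodule.span_insert_zero]

end CornerSimplex

section

variable {E : Type*} [NormedAddCommGroup E] [NormedSpace ℝ E] {d : ℕ}

theorem exists_pos_add_smul_mem_of_mem_intrinsicInterior {s : Set E} {x w : E}
    (hx : x ∈ intrinsicInterior ℝ s) (hw : w ∈ (affineSpan ℝ s).direction) :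
    ∃ τ : ℝ, 0 < τ ∧ x + τ • w ∈ s := by
  obtain ⟨hxs, W, hWo, hxW, hWs⟩ := mem_intrinsicInterior_iff_exists_isOpen.1 hx
  have hcont : Continuous fun τ : ℝ => x + τ • w := by fun_prop
  have hW : ∀ᶠ τ in 𝓝[>] (0 : ℝ), x + τ • w ∈ W :=
    nhdsWithin_le_nhds (hcont.continuousAt.preimage_mem_nhds (by simpa using hWo.mem_nhds hxW))
  obtain ⟨τ, hτW, hτ⟩ := (hW.and self_mem_nhdsWithin).exists
  refine ⟨τ, hτ, hWs ⟨hτW, ?_⟩⟩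
  simpa [add_comm] using
    AffineSubspace.vadd_mem_of_mem_direction (Submodule.smul_mem _ τ hw)
      (subset_affineSpan ℝ s hxs)

theorem sum_apply_smul_eq_of_mem_span {ι : Type*} [Fintype ι] [DecidableEq ι] {b : ι → E}
    {φ : ι → E →L[ℝ] ℝ} (hφ : ∀ i j, φ i (b j) = if i = j then 1 else 0) {z : E}
    (hz : z ∈ span ℝ (range b)) : ∑ i, φ i z • b i = z := by
  obtain ⟨c, rfl⟩ := (Submodule.mem_span_range_iff_exists_fun ℝ).1 hz
  simp [map_sum, hφ]

theorem add_sum_smul_mem_convexHull_cornerSimplex (p : E) (e : Fin d → E) {t : Fin d → ℝ}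
    (ht : ∀ j, 0 ≤ t j) (hsum : ∑ j, t j ≤ 1) :
    p + ∑ j, t j • e j ∈ convexHull ℝ (range (cornerSimplex p e)) := by
  let θ : Fin (d + 1) → ℝ := Fin.cons (1 - ∑ j, t j) t
  have hθ : ∑ i, θ i • cornerSimplex p e i = p + ∑ j, t j • e j := by
    simp only [θ, cornerSimplex, Fin.sum_univ_succ, Fin.cons_zero, Fin.cons_succ, smul_add,
      Finset.sum_add_distrib, ← Finset.sum_smul, sub_smul, one_smul]
    abel
  rw [← hθ]
  refine (convex_convexHull ℝ _).sum_mem (fun i _ => ?_) ?_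
    (fun i _ => subset_convexHull ℝ _ (mem_range_self i))
  · refine Fin.cases ?_ (fun j => ?_) i
    · simpa [θ] using hsum
    · simpa [θ] using ht j
  · simp [θ, Fin.sum_univ_succ]

variable [FiniteDimensional ℝ E]

theorem LinearIndependent.exists_biorthogonal {ι : Type*} [DecidableEq ι] {b : ι → E}
    (hb : LinearIndependent ℝ b) :
    ∃ φ : ι → E →L[ℝ] ℝ, ∀ i j, φ i (b j) = if i = j then 1 else 0 := by
  let B := Module.Basis.span hb
  choose g hg using fun i => LinearMap.exists_extend (B.coord i)
  refine ⟨fun i => LinearMap.toContinuousLinearMap (g i), fun i j => ?_⟩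
  have hBj : B j = ⟨b j, Submodule.subset_span (mem_range_self j)⟩ :=
    Module.Basis.span_apply hb j
  have := LinearMap.congr_fun (hg i) (B j)
  simp only [LinearMap.coe_comp, Function.comp_apply, Submodule.subtype_apply, hBj] at this
  simp [this, ← hBj, Finsupp.single_apply, eq_comm]

theorem add_sum_smul_mem_intrinsicInterior_convexHull_cornerSimplex (p : E) {e : Fin d → E}
    (he : LinearIndependent ℝ e) {t : Fin d → ℝ} (ht : ∀ j, 0 < t j) (hsum : ∑ j, t j < 1) :
    p + ∑ j, t j • e j ∈ intrinsicInterior ℝ (convexHull ℝ (range (cornerSimplex p e))) := by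
  obtain ⟨φ, hφ⟩ := he.exists_biorthogonal
  let W : Set E := (⋂ j, {y | 0 < φ j (y - p)}) ∩ {y | ∑ j, φ j (y - p) < 1}
  have hWo : IsOpen W :=
    (isOpen_iInter_of_finite fun j => isOpen_lt continuous_const (by fun_prop)).inter
      (isOpen_lt (by fun_prop) continuous_const)
  have hφt : ∀ j, φ j (p + ∑ i, t i • e i - p) = t j := by simp [map_sum, hφ]
  refine mem_intrinsicInterior_iff_exists_isOpen.2
    ⟨add_sum_smul_mem_convexHull_cornerSimplex p e (fun j => (ht j).le) hsum.le, W, hWo,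
      ⟨mem_iInter.2 fun j => ?_, ?_⟩, ?_⟩
  · simpa only [mem_ofPred_eq, hφt] using ht j
  · simpa only [mem_ofPred_eq, hφt] using hsum
  rintro y ⟨⟨hy, hysum⟩, hyA⟩
  rw [SetLike.mem_coe, affineSpan_convexHull, affineSpan_cornerSimplex,
    AffineSubspace.mem_mk', vsub_eq_sub] at hyA
  have hy' : y = p + ∑ j, φ j (y - p) • e j := by
    rw [sum_apply_smul_eq_of_mem_span hφ hyA]; abel
  rw [hy']
  exact add_sum_smul_mem_convexHull_cornerSimplex p e (fun j => (mem_iInter.1 hy j).le) hysum.le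

theorem exists_add_sum_smul_of_mem_intrinsicInterior {T C : Set E} (hCT : C ⊆ closure T)
    (hTC : T ⊆ affineSpan ℝ C) {b : Fin d → E} (hb : LinearIndependent ℝ b)
    (hbC : span ℝ (range b) = (affineSpan ℝ C).direction) {x : E}
    (hx : x ∈ intrinsicInterior ℝ C) :
    ∃ p ∈ T, ∃ t : Fin d → ℝ, (∀ j, 0 < t j) ∧ x = p + ∑ j, t j • b j := by
  obtain ⟨φ, hφ⟩ := hb.exists_biorthogonal
  have hw : -∑ j, b j ∈ (affineSpan ℝ C).direction := by
    rw [← hbC]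
    exact neg_mem (sum_mem fun j _ => Submodule.subset_span (mem_range_self j))
  obtain ⟨τ, hτ, hu⟩ := exists_pos_add_smul_mem_of_mem_intrinsicInterior hx hw
  let U : Set E := ⋂ j, {y | 0 < φ j (x - y)}
  have hUo : IsOpen U :=
    isOpen_iInter_of_finite fun j => isOpen_lt continuous_const (by fun_prop)
  have huU : x + τ • -∑ j, b j ∈ U := mem_iInter.2 fun j => by simpa [map_sum, hφ] using hτ
  obtain ⟨p, hpU, hpT⟩ := mem_closure_iff.1 (hCT hu) U hUo huU
  have hxp : x - p ∈ span ℝ (range b) := by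
    rw [hbC, ← vsub_eq_sub]
    exact AffineSubspace.vsub_mem_direction
      (subset_affineSpan ℝ C (intrinsicInterior_subset hx)) (hTC hpT)
  refine ⟨p, hpT, fun j => φ j (x - p), fun j => mem_iInter.1 hpU j, ?_⟩
  rw [sum_apply_smul_eq_of_mem_span hφ hxp]
  abel

theorem exists_simplex_of_mem_intrinsicInterior {T C : Set E}
    (hT : ∀ a ∈ T, ∀ b ∈ T, a + b ∈ T) (hCT : C ⊆ closure T)
    (hC : (affineSpan ℝ C : Set E) = span ℝ T) {x : E} (hx : x ∈ intrinsicInterior ℝ C) :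
    ∃ (k : ℕ) (v : Fin (k + 1) → E), (∀ i, v i ∈ T) ∧ AffineIndependent ℝ v ∧
      (affineSpan ℝ (range v) : Set E) = span ℝ T ∧
      x ∈ intrinsicInterior ℝ (convexHull ℝ (range v)) := by
  obtain ⟨d, b, hb, hbT, hbspan⟩ := exists_linearIndependent_fin (K := ℝ) T
  have hCspan : affineSpan ℝ C = (span ℝ T).toAffineSubspace := SetLike.coe_injective hC
  obtain ⟨p, hpT, t, ht, rfl⟩ := exists_add_sum_smul_of_mem_intrinsicInterior hCT
    (hC ▸ Submodule.subset_span) hb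
    (by rw [hCspan, Submodule.toAffineSubspace_direction, hbspan]) hx
  -- `K` is an integer so that `K • b j ∈ T`, and `K > ∑ t` keeps the weight of `p` positive.
  obtain ⟨K, hK⟩ := exists_nat_gt (∑ j, t j)
  have hK0 : (0 : ℝ) < K := (Finset.sum_nonneg fun j _ => (ht j).le).trans_lt hK
  have hKb : LinearIndependent ℝ fun j => (K : ℝ) • b j :=
    hb.units_smul fun _ => Units.mk0 (K : ℝ) hK0.ne'
  refine ⟨d, cornerSimplex p fun j => (K : ℝ) • b j, fun i => ?_,
    affineIndependent_cornerSimplex p hKb, ?_, ?_⟩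
  · refine Fin.cases hpT (fun j => ?_) i
    rw [cornerSimplex_succ, Nat.cast_smul_eq_nsmul]
    exact hT _ hpT _
      (nsmul_mem_of_add_mem hT (hbT (mem_range_self j)) (by exact_mod_cast hK0.ne'))
  · rw [affineSpan_cornerSimplex, Set.range_smul,
      Submodule.span_smul_eq_of_isUnit _ _ (isUnit_iff_ne_zero.2 hK0.ne'), hbspan]
    ext y
    simp [AffineSubspace.mem_mk', Submodule.sub_mem_iff_left _ (Submodule.subset_span hpT)]
  · have hsum : ∑ j, t j / K < 1 := by rwa [← Finset.sum_div, div_lt_one hK0]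
    have hx' : ∑ j, t j • b j = ∑ j, (t j / K) • ((K : ℝ) • b j) := by
      simp_rw [smul_smul, div_mul_cancel₀ _ hK0.ne']
    rw [hx']
    exact add_sum_smul_mem_intrinsicInterior_convexHull_cornerSimplex p hKb
      (fun j => div_pos (ht j) hK0) hsum

end

section Closure

variable {E : Type*} [AddCommGroup E] [Module ℝ E] [TopologicalSpace E] [ContinuousSMul ℝ E]

theorem Ici_zero_subset_closure_ratCast : Ici (0 : ℝ) ⊆ closure ((↑) '' Ioi (0 : ℚ)) := by
  have hIoi : Ioi (0 : ℝ) ⊆ closure ((↑) '' Ioi (0 : ℚ)) := by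
    refine (Rat.denseRange_cast.open_subset_closure_inter isOpen_Ioi).trans (closure_mono ?_)
    rintro _ ⟨hq, q, rfl⟩
    exact ⟨q, Rat.cast_pos.1 (mem_Ioi.1 hq), rfl⟩
  rw [← closure_Ioi]
  exact closure_minimal hIoi isClosed_closure

theorem smul_mem_closure_of_ratCast_smul_mem {T : Set E}
    (hT : ∀ q : ℚ, 0 < q → ∀ a ∈ T, (q : ℝ) • a ∈ T) {r : ℝ} (hr : 0 ≤ r) {a : E}
    (ha : a ∈ closure T) : r • a ∈ closure T :=
  map_mem_closure₂ continuous_smul (Ici_zero_subset_closure_ratCast hr) ha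
    (by rintro _ ⟨q, hq, rfl⟩ b hb; exact hT q hq b hb)

end Closure

section ConeHull

variable {m : ℕ}

theorem zero_mem_coneHull (A : Set (Fin m → ℝ)) : 0 ∈ coneHull A :=
  ⟨∅, fun _ => 0, by simp, by simp, by simp⟩

theorem subset_coneHull (A : Set (Fin m → ℝ)) : A ⊆ coneHull A :=
  fun a ha => ⟨{a}, fun _ => 1, by simpa using ha, by simp, by simp⟩

theorem coneHull_subset_span (A : Set (Fin m → ℝ)) : coneHull A ⊆ span ℝ A := by
  rintro _ ⟨s, w, hsA, -, rfl⟩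
  exact sum_mem fun a ha => Submodule.smul_mem _ _ (Submodule.subset_span (hsA ha))

theorem affineSpan_coneHull (A : Set (Fin m → ℝ)) :
    (affineSpan ℝ (coneHull A) : Set (Fin m → ℝ)) = span ℝ A := by
  rw [← insert_eq_of_mem (zero_mem_coneHull A), affineSpan_insert_zero]
  exact congrArg _ (le_antisymm (Submodule.span_le.2 (coneHull_subset_span A))
    (Submodule.span_mono (subset_coneHull A)))

theorem coneHull_subset_closure {A T : Set (Fin m → ℝ)} (hAT : A ⊆ T) (hT : T.Nonempty)
    (hadd : ∀ a ∈ T, ∀ b ∈ T, a + b ∈ T) (hsmul : ∀ q : ℚ, 0 < q → ∀ a ∈ T, (q : ℝ) • a ∈ T) :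
    coneHull A ⊆ closure T := by
  rintro _ ⟨s, w, hsA, hw, rfl⟩
  obtain ⟨a₀, ha₀⟩ := hT
  refine Finset.sum_induction _ (· ∈ closure T)
    (fun a b ha hb => map_mem_closure₂ continuous_add ha hb hadd) ?_
    (fun a ha => smul_mem_closure_of_ratCast_smul_mem hsmul (hw a ha)
      (subset_closure (hAT (hsA ha))))
  simpa using smul_mem_closure_of_ratCast_smul_mem hsmul le_rfl (subset_closure ha₀)

end ConeHull

section Sstar

variable {m : ℕ} {S : Set (Fin m → ℤ)}

theorem zc_add (s t : Fin m → ℤ) : zc (s + t) = zc s + zc t := by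
  funext i; simp [zc]

theorem zc_nsmul (n : ℕ) (s : Fin m → ℤ) : zc (n • s) = (n : ℝ) • zc s := by
  funext i; simp [zc]

theorem zc_mem_Sstar {s : Fin m → ℤ} (hs : s ∈ S) : zc s ∈ Sstar S :=
  ⟨1, one_pos, s, hs, by simp⟩

theorem Sstar_subset_span : Sstar S ⊆ span ℝ (zc '' S) := by
  rintro a ⟨n, hn, s, hs, hna⟩
  have ha : a = (n : ℝ)⁻¹ • zc s := by
    rw [← hna, smul_smul, inv_mul_cancel₀ (by positivity), one_smul]
  exact ha ▸ Submodule.smul_mem _ _ (Submodule.subset_span (mem_image_of_mem zc hs))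

theorem span_Sstar : span ℝ (Sstar S) = span ℝ (zc '' S) :=
  le_antisymm (Submodule.span_le.2 Sstar_subset_span)
    (Submodule.span_mono (image_subset_iff.2 fun _ => zc_mem_Sstar))

theorem add_mem_Sstar (hSadd : ∀ x ∈ S, ∀ y ∈ S, x + y ∈ S) {a b : Fin m → ℝ}
    (ha : a ∈ Sstar S) (hb : b ∈ Sstar S) : a + b ∈ Sstar S := by
  obtain ⟨n, hn, s, hs, hna⟩ := ha
  obtain ⟨k, hk, t, ht, hkb⟩ := hb
  refine ⟨n * k, Nat.mul_pos hn hk, k • s + n • t,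
    hSadd _ (nsmul_mem_of_add_mem hSadd hs hk.ne') _ (nsmul_mem_of_add_mem hSadd ht hn.ne'), ?_⟩
  rw [zc_add, zc_nsmul, zc_nsmul, ← hna, ← hkb, smul_smul, smul_smul, smul_add, Nat.cast_mul,
    mul_comm (k : ℝ)]

theorem ratCast_smul_mem_Sstar (hSadd : ∀ x ∈ S, ∀ y ∈ S, x + y ∈ S) {q : ℚ} (hq : 0 < q)
    {a : Fin m → ℝ} (ha : a ∈ Sstar S) : (q : ℝ) • a ∈ Sstar S := by
  obtain ⟨n, hn, s, hs, hna⟩ := ha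
  obtain ⟨k, hk⟩ : ∃ k : ℕ, (k : ℤ) = q.num :=
    ⟨q.num.toNat, Int.toNat_of_nonneg (Rat.num_pos.2 hq).le⟩
  have hk0 : k ≠ 0 := by rintro rfl; exact (Rat.num_pos.2 hq).ne' hk.symm
  refine ⟨q.den * n, Nat.mul_pos q.den_pos hn, k • s, nsmul_mem_of_add_mem hSadd hs hk0, ?_⟩
  have hden : (q.den : ℝ) * q = k := by
    rw [← Rat.cast_natCast, ← Rat.cast_mul, Rat.den_mul_eq_num, ← hk]; norm_cast
  rw [zc_nsmul, ← hna, smul_smul, smul_smul, Nat.cast_mul, mul_right_comm, hden]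

end Sstar

/-- every point of the asymptotic cone `O = rint(cone(S))` lies in the
relative interior of an `L`-simplex with vertices in `S*`, `L = lin(S)`. -/
theorem stmt7 {m : ℕ} (S : Set (Fin m → ℤ)) (hSne : S.Nonempty)
    (hSadd : ∀ x ∈ S, ∀ y ∈ S, x + y ∈ S) :
    ∀ x ∈ intrinsicInterior ℝ (coneHull (zc '' S)),
      ∃ (k : ℕ) (v : Fin (k + 1) → (Fin m → ℝ)),
        (∀ i, v i ∈ Sstar S) ∧ AffineIndependent ℝ v ∧
        (affineSpan ℝ (Set.range v) : Set (Fin m → ℝ)) =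
          (Submodule.span ℝ (zc '' S) : Set (Fin m → ℝ)) ∧
        x ∈ intrinsicInterior ℝ (convexHull ℝ (Set.range v)) := by
  intro x hx
  obtain ⟨s₀, hs₀⟩ := hSne
  rw [← span_Sstar]
  exact exists_simplex_of_mem_intrinsicInterior (fun a ha b hb => add_mem_Sstar hSadd ha hb)
    (coneHull_subset_closure (image_subset_iff.2 fun _ => zc_mem_Sstar) ⟨_, zc_mem_Sstar hs₀⟩
      (fun a ha b hb => add_mem_Sstar hSadd ha hb)
      (fun q hq a ha => ratCast_smul_mem_Sstar hSadd hq ha))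
    (by rw [affineSpan_coneHull, span_Sstar]) hx
end
end

section
/- Let S ⊆ ℤ^m and T ⊆ ℤ^n be vector semigroups and π : S → T a semigroup homomorphism (π(x+y) = π(x) + π(y) for all x, y ∈ S, and π(0) = 0 if 0 ∈ S). Then π extends to a linear operator from lin(S) to lin(T). -/
/-!
Adjoining `0` to `S` makes `π` a monoid homomorphism on the submonoid `S ∪ {0}`, so `π` respects
every relation `∑ aᵢ xᵢ = ∑ bᵢ xᵢ` with natural coefficients among elements of `S`; splitting
signs, it respects every integer relation, and after clearing denominators every rational one.
Hence `x ↦ π x` extends to a `ℚ`-linear map `ℚ^m → ℚ^n`, and its matrix, read over `ℝ`, is the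
required operator. Working over `ℚ` first avoids having to show that real relations among
integer vectors are spanned by rational ones.
-/

open Set Filter Topology MeasureTheory ProbabilityTheory Pointwise

noncomputable section

open Finset

section SemigroupHom

variable {G H ι : Type*} [AddCommMonoid G] [AddCommMonoid H] {S : Set G} {π : G → H}

def AddSubmonoid.ofAddClosed (S : Set G) (hS : ∀ x ∈ S, ∀ y ∈ S, x + y ∈ S) :
    AddSubmonoid G where
  carrier := insert 0 S
  zero_mem' := Set.mem_insert 0 S
  add_mem' := by
    rintro x y (rfl | hx) (rfl | hy)
    · simp
    · simpa using Or.inr hy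
    · simpa using Or.inr hx
    · exact Or.inr (hS x hx y hy)

theorem exists_addMonoidHom_of_map_add (hS : ∀ x ∈ S, ∀ y ∈ S, x + y ∈ S)
    (hπ : ∀ x ∈ S, ∀ y ∈ S, π (x + y) = π x + π y) (h0 : (0 : G) ∈ S → π 0 = 0) :
    ∃ f : AddSubmonoid.ofAddClosed S hS →+ H, ∀ x (hx : x ∈ S), f ⟨x, Or.inr hx⟩ = π x := by
  classical
  have hπ0 : ∀ x ∈ S, (if x = 0 then 0 else π x) = π x := by
    intro x hx
    split_ifs with h
    · subst h; exact (h0 hx).symm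
    · rfl
  refine ⟨{ toFun := fun x => if (x : G) = 0 then 0 else π x, map_zero' := by simp,
            map_add' := ?_ }, fun x hx => hπ0 x hx⟩
  rintro ⟨x, rfl | hx⟩ ⟨y, rfl | hy⟩
  · simp
  · simp
  · simp
  · simp only [AddSubmonoid.coe_add]
    rw [hπ0 _ (hS x hx y hy), hπ0 x hx, hπ0 y hy, hπ x hx y hy]

theorem sum_nsmul_map_eq_of_sum_nsmul_eq (hS : ∀ x ∈ S, ∀ y ∈ S, x + y ∈ S)
    (hπ : ∀ x ∈ S, ∀ y ∈ S, π (x + y) = π x + π y) (h0 : (0 : G) ∈ S → π 0 = 0)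
    (s : Finset ι) (x : ι → G) (hx : ∀ i, x i ∈ S) (a b : ι → ℕ)
    (h : ∑ i ∈ s, a i • x i = ∑ i ∈ s, b i • x i) :
    ∑ i ∈ s, a i • π (x i) = ∑ i ∈ s, b i • π (x i) := by
  obtain ⟨f, hf⟩ := exists_addMonoidHom_of_map_add hS hπ h0
  let y : ι → AddSubmonoid.ofAddClosed S hS := fun i => ⟨x i, Or.inr (hx i)⟩
  have hcoe : ∀ c : ι → ℕ, ((∑ i ∈ s, c i • y i : AddSubmonoid.ofAddClosed S hS) : G) =
      ∑ i ∈ s, c i • x i := fun c => by simp [y]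
  have hy : ∑ i ∈ s, a i • y i = ∑ i ∈ s, b i • y i := Subtype.ext (by rw [hcoe, hcoe, h])
  have hfy : ∀ i, f (y i) = π (x i) := fun i => hf (x i) (hx i)
  simpa only [map_sum, map_nsmul, hfy] using congrArg f hy

end SemigroupHom

section SemigroupHomGroup

variable {G H ι : Type*} [AddCommGroup G] [AddCommGroup H] {S : Set G} {π : G → H}

theorem sum_zsmul_eq_sum_toNat_nsmul_sub (s : Finset ι) (a : ι → ℤ) (z : ι → G) :
    ∑ i ∈ s, a i • z i = ∑ i ∈ s, (a i).toNat • z i - ∑ i ∈ s, (-a i).toNat • z i := by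
  rw [← sum_sub_distrib]
  refine sum_congr rfl fun i _ => ?_
  rw [← natCast_zsmul, ← natCast_zsmul, ← sub_smul, Int.toNat_sub_toNat_neg]

theorem sum_zsmul_map_eq_zero (hS : ∀ x ∈ S, ∀ y ∈ S, x + y ∈ S)
    (hπ : ∀ x ∈ S, ∀ y ∈ S, π (x + y) = π x + π y) (h0 : (0 : G) ∈ S → π 0 = 0)
    (s : Finset ι) (x : ι → G) (hx : ∀ i, x i ∈ S) (a : ι → ℤ)
    (h : ∑ i ∈ s, a i • x i = 0) : ∑ i ∈ s, a i • π (x i) = 0 := by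
  rw [sum_zsmul_eq_sum_toNat_nsmul_sub, sub_eq_zero] at h ⊢
  exact sum_nsmul_map_eq_of_sum_nsmul_eq hS hπ h0 s x hx _ _ h

end SemigroupHomGroup

theorem sum_zsmul_eq_smul_sum_of_intCast_eq {M ι : Type*} [AddCommGroup M] [Module ℚ M]
    {s : Finset ι} {a : ι → ℤ} {c : ι → ℚ} {q : ℚ} (ha : ∀ i ∈ s, (a i : ℚ) = q * c i)
    (z : ι → M) : ∑ i ∈ s, a i • z i = q • ∑ i ∈ s, c i • z i := by
  rw [smul_sum]
  refine sum_congr rfl fun i hi => ?_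
  rw [← Int.cast_smul_eq_zsmul ℚ, ha i hi, mul_smul]

theorem sum_smul_eq_zero_of_sum_zsmul_eq_zero {V W ι : Type*} [AddCommGroup V] [Module ℚ V]
    [AddCommGroup W] [Module ℚ W] (v : ι → V) (w : ι → W)
    (h : ∀ (s : Finset ι) (a : ι → ℤ), ∑ i ∈ s, a i • v i = 0 → ∑ i ∈ s, a i • w i = 0)
    (s : Finset ι) (c : ι → ℚ) (hc : ∑ i ∈ s, c i • v i = 0) : ∑ i ∈ s, c i • w i = 0 := by
  obtain ⟨b, hb⟩ := IsLocalization.exist_integer_multiples (nonZeroDivisors ℤ) s c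
  choose! a ha using hb
  have ha' : ∀ i ∈ s, (a i : ℚ) = ((b : ℤ) : ℚ) * c i := fun i hi => by simpa using ha i hi
  have hb0 : ((b : ℤ) : ℚ) ≠ 0 := Int.cast_ne_zero.2 (nonZeroDivisors.coe_ne_zero b)
  have hw := h s a (by rw [sum_zsmul_eq_smul_sum_of_intCast_eq ha', hc, smul_zero])
  rw [sum_zsmul_eq_smul_sum_of_intCast_eq ha'] at hw
  exact (smul_eq_zero.1 hw).resolve_left hb0

theorem exists_linearMap_apply_eq_of_relations {K V W ι : Type*} [Field K] [AddCommGroup V]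
    [Module K V] [AddCommGroup W] [Module K W] (v : ι → V) (w : ι → W)
    (h : ∀ (s : Finset ι) (c : ι → K), ∑ i ∈ s, c i • v i = 0 → ∑ i ∈ s, c i • w i = 0) :
    ∃ u : V →ₗ[K] W, ∀ i, u (v i) = w i := by
  let f := Finsupp.linearCombination K v
  let g := Finsupp.linearCombination K w
  have hker : LinearMap.ker f ≤ LinearMap.ker g := fun c hc => by
    simpa [f, g, Finsupp.linearCombination_apply, Finsupp.sum] using h c.support c hc
  obtain ⟨l, hl⟩ := LinearMap.exists_leftInverse_of_injective ((LinearMap.ker f).liftQ f le_rfl)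
    (Submodule.ker_liftQ_eq_bot _ _ _ le_rfl)
  refine ⟨(LinearMap.ker f).liftQ g hker ∘ₗ l, fun i => ?_⟩
  have hl' := LinearMap.congr_fun hl ((LinearMap.ker f).mkQ (Finsupp.single i 1))
  have hfi : f (Finsupp.single i 1) = v i := by simp [f]
  simp only [LinearMap.comp_apply, Submodule.mkQ_apply, Submodule.liftQ_apply, hfi,
    LinearMap.id_apply] at hl'
  simp [hl', g]

theorem LinearMap.exists_apply_comp_ringHom {R S m n : Type*} [CommRing R] [CommRing S]
    [Fintype m] [DecidableEq m] (f : R →+* S) (u : (m → R) →ₗ[R] (n → R)) :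
    ∃ u' : (m → S) →ₗ[S] (n → S), ∀ v, u' (f ∘ v) = f ∘ u v :=
  ⟨Matrix.toLin' ((LinearMap.toMatrix' u).map f), fun v => funext fun j => by
    rw [Matrix.toLin'_apply, ← RingHom.map_mulVec, LinearMap.toMatrix'_mulVec, Function.comp_apply]⟩

theorem stmt10_general {m n : ℕ} (S : Set (Fin m → ℤ)) (T : Set (Fin n → ℤ))
    (hSadd : ∀ x ∈ S, ∀ y ∈ S, x + y ∈ S)
    (π : (Fin m → ℤ) → (Fin n → ℤ)) (hπT : ∀ x ∈ S, π x ∈ T)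
    (hhom : ∀ x ∈ S, ∀ y ∈ S, π (x + y) = π x + π y)
    (h0 : (0 : Fin m → ℤ) ∈ S → π 0 = 0) :
    ∃ u : (Fin m → ℝ) →ₗ[ℝ] (Fin n → ℝ),
      (∀ x ∈ S, u (zc x) = zc (π x)) ∧
      ∀ v ∈ Submodule.span ℝ (zc '' S), u v ∈ Submodule.span ℝ (zc '' T) := by
  let castQ (k : ℕ) : (Fin k → ℤ) →+ (Fin k → ℚ) := (Int.castAddHom ℚ).compLeft (Fin k)
  have hcastQ (k : ℕ) : Function.Injective (castQ k) := Int.cast_injective.comp_left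
  have hrelQ (s : Finset S) (a : S → ℤ) (ha : ∑ x ∈ s, a x • castQ m x = 0) :
      ∑ x ∈ s, a x • castQ n (π x) = 0 := by
    simp only [← map_zsmul, ← map_sum, map_eq_zero_iff _ (hcastQ _)] at ha ⊢
    exact sum_zsmul_map_eq_zero hSadd hhom h0 s Subtype.val Subtype.prop a ha
  obtain ⟨u₀, hu₀⟩ := exists_linearMap_apply_eq_of_relations (fun x : S => castQ m x)
    (fun x : S => castQ n (π x)) (sum_smul_eq_zero_of_sum_zsmul_eq_zero _ _ hrelQ)
  obtain ⟨u, hu⟩ := LinearMap.exists_apply_comp_ringHom (Rat.castHom ℝ) u₀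
  have hzc (k : ℕ) (x : Fin k → ℤ) : zc x = Rat.castHom ℝ ∘ castQ k x := by
    funext i; simp [zc, castQ]
  have hux (x : Fin m → ℤ) (hx : x ∈ S) : u (zc x) = zc (π x) := by
    rw [hzc, hzc, hu, hu₀ ⟨x, hx⟩]
  have hspan : Submodule.span ℝ (zc '' S) ≤ (Submodule.span ℝ (zc '' T)).comap u := by
    rw [Submodule.span_le]
    rintro _ ⟨x, hx, rfl⟩
    exact Submodule.subset_span ⟨π x, hπT x hx, (hux x hx).symm⟩
  exact ⟨u, hux, fun v hv => hspan hv⟩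

/-- a semigroup homomorphism `π : S → T` between vector semigroups
extends to a linear operator from `lin(S)` to `lin(T)`. -/
theorem stmt10 {m n : ℕ} (S : Set (Fin m → ℤ)) (T : Set (Fin n → ℤ))
    (hSne : S.Nonempty) (hSadd : ∀ x ∈ S, ∀ y ∈ S, x + y ∈ S)
    (hTne : T.Nonempty) (hTadd : ∀ x ∈ T, ∀ y ∈ T, x + y ∈ T)
    (π : (Fin m → ℤ) → (Fin n → ℤ)) (hπT : ∀ x ∈ S, π x ∈ T)
    (hhom : ∀ x ∈ S, ∀ y ∈ S, π (x + y) = π x + π y)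
    (h0 : (0 : Fin m → ℤ) ∈ S → π 0 = 0) :
    ∃ u : (Fin m → ℝ) →ₗ[ℝ] (Fin n → ℝ),
      (∀ x ∈ S, u (zc x) = zc (π x)) ∧
      ∀ v ∈ Submodule.span ℝ (zc '' S), u v ∈ Submodule.span ℝ (zc '' T) :=
  stmt10_general S T hSadd π hπT hhom h0
end
end

section
/- Let Z be a random variable with E|Z|^k < ∞ and EZ = 0 for some integer k ≥ 2, and let (Z_i)_{i≥1} be an l-dependent sequence of copies of Z for some natural l (i.e., for all n the families (Z_1, …, Z_n) and (Z_i : i ≥ n+l) are independent). Fix ε > 0, set S_n = Z_1 + ⋯ + Z_n and M = sup_{n≥0} (S_n − nε). Then E M^{k−1} < ∞. -/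
/-!
Along each residue class `r mod (l + 1)` the `Z_i` are independent copies of `Z`, and the drifted
walk splits into the `l + 1` walks along these classes, so `M` is at most the sum of their maxima.

For a walk with independent increments, the running maxima `M_N = max_{n ≤ N} (S_n - nε)` obey
Lindley's recursion `M_{N+1} = (M'_N + Z_0 - ε)⁺`, where `M'_N` is the running maximum of the
shifted walk: it has the law of `M_N` and is independent of `Z_0`. Expanding `(w + x)⁺ ^ k` to
second order in `x`, absorbing the terms of lower degree in `w` by `w^m ≤ w^(k-1)/R + R^m` for a
large `R`, and taking expectations (`E (Z_0 - ε) = -ε`) gives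
`E M_{N+1}^k ≤ E M_N^k - (kε/2) E M_N^(k-1) + D`. Since `E M_N^(k-1)` is nondecreasing in `N`,
summing this telescoping inequality bounds it uniformly, and monotone convergence concludes.
-/

open Set Filter Topology MeasureTheory ProbabilityTheory Pointwise

noncomputable section

open Finset

def driftedWalk (ε : ℝ) (y : ℕ → ℝ) (n : ℕ) : ℝ := ∑ i ∈ range n, y i - n * ε

section DriftedWalk

variable {ε : ℝ} {y : ℕ → ℝ}

@[simp]
lemma driftedWalk_zero : driftedWalk ε y 0 = 0 := by simp [driftedWalk]

lemma driftedWalk_succ (n : ℕ) :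
    driftedWalk ε y (n + 1) = driftedWalk ε (fun i => y (i + 1)) n + (y 0 - ε) := by
  simp only [driftedWalk, sum_range_succ', Nat.cast_succ]
  ring

lemma partialSups_driftedWalk_nonneg (N : ℕ) : 0 ≤ partialSups (driftedWalk ε y) N := by
  simpa using le_partialSups_of_le (driftedWalk ε y) (Nat.zero_le N)

lemma partialSups_driftedWalk_succ (N : ℕ) :
    partialSups (driftedWalk ε y) (N + 1) =
      max 0 (partialSups (driftedWalk ε (fun i => y (i + 1))) N + (y 0 - ε)) := by
  apply le_antisymm
  · refine partialSups_le _ _ _ fun n hn => ?_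
    rcases n with _ | n
    · simp
    · rw [driftedWalk_succ]
      exact le_max_of_le_right (add_le_add_left (le_partialSups_of_le _ (by omega)) _)
  · refine max_le (partialSups_driftedWalk_nonneg _) ?_
    rw [← le_sub_iff_add_le]
    refine partialSups_le _ _ _ fun n hn => ?_
    rw [le_sub_iff_add_le, ← driftedWalk_succ]
    exact le_partialSups_of_le _ (by omega)

lemma partialSups_driftedWalk_le_sum_abs (hε : 0 ≤ ε) (N : ℕ) :
    partialSups (driftedWalk ε y) N ≤ ∑ i ∈ range N, |y i| := by
  refine partialSups_le _ _ _ fun n hn => ?_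
  calc driftedWalk ε y n ≤ ∑ i ∈ range n, |y i| := by
        unfold driftedWalk
        have : (0 : ℝ) ≤ n * ε := by positivity
        linarith [sum_le_sum fun i (_ : i ∈ range n) => le_abs_self (y i)]
    _ ≤ ∑ i ∈ range N, |y i| :=
        sum_le_sum_of_subset_of_nonneg (range_subset_range.2 hn) fun _ _ _ => abs_nonneg _

lemma measurable_partialSups_driftedWalk (ε : ℝ) (N : ℕ) :
    Measurable fun y : ℕ → ℝ => partialSups (driftedWalk ε y) N := by
  simp_rw [partialSups_eq_sup'_range]
  refine Finset.measurable_range_sup'' fun n _ => ?_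
  unfold driftedWalk
  fun_prop

end DriftedWalk

/-- The number of `i < n` with `i ≡ r [MOD L]`, for `r < L`. -/
def residueCount (L r n : ℕ) : ℕ := (n + L - 1 - r) / L

lemma lt_residueCount_iff {L r n j : ℕ} (hr : r < L) :
    j < residueCount L r n ↔ r + L * j < n := by
  rw [residueCount, ← Nat.add_one_le_iff, Nat.le_div_iff_mul_le (by omega), add_mul, one_mul,
    mul_comm]
  omega

lemma residueCount_le {L r n : ℕ} (hr : r < L) : residueCount L r n ≤ n := by
  by_contra h
  have := (lt_residueCount_iff hr).1 (not_le.1 h)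
  nlinarith

lemma sum_range_eq_sum_residueCount {M : Type*} [AddCommMonoid M] (f : ℕ → M) {L : ℕ}
    (hL : 0 < L) (n : ℕ) :
    ∑ i ∈ range n, f i = ∑ r ∈ range L, ∑ j ∈ range (residueCount L r n), f (r + L * j) := by
  rw [sum_sigma']
  refine sum_nbij' (fun i => ⟨i % L, i / L⟩) (fun p => p.1 + L * p.2) ?_ ?_ ?_ ?_ ?_
  · intro i hi
    simp only [mem_sigma, Finset.mem_range] at hi ⊢
    refine ⟨Nat.mod_lt _ hL, (lt_residueCount_iff (Nat.mod_lt _ hL)).2 ?_⟩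
    rwa [Nat.mod_add_div]
  · rintro ⟨r, j⟩ h
    simp only [mem_sigma, Finset.mem_range] at h ⊢
    exact (lt_residueCount_iff h.1).1 h.2
  · intro i _
    exact Nat.mod_add_div i L
  · rintro ⟨r, j⟩ h
    simp only [mem_sigma, Finset.mem_range] at h
    simp [Nat.add_mul_mod_self_left, Nat.mod_eq_of_lt h.1, Nat.add_mul_div_left _ _ hL,
      Nat.div_eq_of_lt h.1]
  · intro i _
    simp [Nat.mod_add_div]

lemma partialSups_driftedWalk_le_sum_residues {ε : ℝ} (y : ℕ → ℝ) {L : ℕ} (hL : 0 < L)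
    (N : ℕ) :
    partialSups (driftedWalk ε y) N ≤
      ∑ r ∈ range L, partialSups (driftedWalk ε (fun j => y (r + L * j))) N := by
  refine partialSups_le _ _ _ fun n hn => ?_
  have hcount : (n : ℝ) = ∑ r ∈ range L, (residueCount L r n : ℝ) := by
    exact_mod_cast by simpa using sum_range_eq_sum_residueCount (fun _ => (1 : ℕ)) hL n
  calc driftedWalk ε y n
      = ∑ r ∈ range L, driftedWalk ε (fun j => y (r + L * j)) (residueCount L r n) := by
        simp only [driftedWalk, sum_sub_distrib, ← sum_mul, ← hcount,
          ← sum_range_eq_sum_residueCount _ hL]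
    _ ≤ _ := sum_le_sum fun r hr =>
        le_partialSups_of_le _ ((residueCount_le (Finset.mem_range.1 hr)).trans hn)

lemma pow_le_one_add_pow {a : ℝ} (ha : 0 ≤ a) {j k : ℕ} (hjk : j ≤ k) : a ^ j ≤ 1 + a ^ k := by
  rcases le_total a 1 with h | h
  · linarith [pow_le_one₀ ha h (n := j), pow_nonneg ha k]
  · linarith [pow_le_pow_right₀ h hjk]

lemma pow_le_pow_div_add_pow {w R : ℝ} (hw : 0 ≤ w) (hR : 1 ≤ R) {m n : ℕ} (hmn : m < n) :
    w ^ m ≤ w ^ n / R + R ^ m := by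
  rcases le_total w R with h | h
  · have : 0 ≤ w ^ n / R := by positivity
    linarith [pow_le_pow_left₀ hw h m]
  · have : w ^ m ≤ w ^ n / R := by
      rw [le_div_iff₀ (by linarith)]
      calc w ^ m * R ≤ w ^ m * w := by gcongr
        _ = w ^ (m + 1) := (pow_succ w m).symm
        _ ≤ w ^ n := pow_le_pow_right₀ (hR.trans h) hmn
    linarith [pow_nonneg (zero_le_one.trans hR) m]

lemma add_pow_le_sum {k : ℕ} (hk : 2 ≤ k) {w : ℝ} (hw : 0 ≤ w) (x : ℝ) :
    (w + x) ^ k ≤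
      w ^ k + k * w ^ (k - 1) * x + 2 ^ k * ∑ m ∈ range (k - 1), w ^ m * |x| ^ (k - m) := by
  obtain ⟨n, rfl⟩ : ∃ n, k = n + 2 := ⟨k - 2, by omega⟩
  have hlow : ∑ m ∈ range (n + 1), w ^ m * x ^ (n + 2 - m) * ((n + 2).choose m : ℝ) ≤
      2 ^ (n + 2) * ∑ m ∈ range (n + 1), w ^ m * |x| ^ (n + 2 - m) := by
    rw [mul_sum]
    refine sum_le_sum fun m _ => ?_
    calc w ^ m * x ^ (n + 2 - m) * ((n + 2).choose m : ℝ)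
        ≤ w ^ m * |x| ^ (n + 2 - m) * ((n + 2).choose m : ℝ) := by
          gcongr w ^ m * ?_ * _
          exact (le_abs_self _).trans_eq (abs_pow x _)
      _ ≤ 2 ^ (n + 2) * (w ^ m * |x| ^ (n + 2 - m)) := by
          rw [mul_comm]
          gcongr
          exact_mod_cast Nat.choose_le_two_pow _ _
  rw [add_pow, sum_range_succ, sum_range_succ, Nat.choose_self,
    show n + 2 = (n + 1) + 1 from rfl, Nat.choose_succ_self_right]
  simp only [Nat.sub_self, show n + 1 + 1 - (n + 1) = 1 by omega,
    show n + 1 + 1 - 1 = n + 1 by omega] at hlow ⊢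
  push_cast at hlow ⊢
  linarith

lemma max_zero_add_pow_le_sum {k : ℕ} (hk : 2 ≤ k) {w : ℝ} (hw : 0 ≤ w) (x : ℝ) :
    max 0 (w + x) ^ k ≤
      w ^ k + k * w ^ (k - 1) * x + 2 ^ k * ∑ m ∈ range (k - 1), w ^ m * |x| ^ (k - m) := by
  rcases le_or_gt 0 (w + x) with h | h
  · rw [max_eq_right h]
    exact add_pow_le_sum hk hw x
  obtain ⟨n, rfl⟩ : ∃ n, k = n + 2 := ⟨k - 2, by omega⟩
  rw [show n + 2 - 1 = n + 1 by omega]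
  have hx : w ≤ |x| := by rw [abs_of_neg (by linarith)]; linarith
  have hsingle : w ^ n * |x| ^ 2 ≤ ∑ m ∈ range (n + 1), w ^ m * |x| ^ (n + 2 - m) := by
    simpa using single_le_sum (f := fun m => w ^ m * |x| ^ (n + 2 - m))
      (fun _ _ => by positivity) (Finset.self_mem_range_succ n)
  have hk : ((n + 2 : ℕ) : ℝ) ≤ 2 ^ (n + 2) := by exact_mod_cast (Nat.lt_two_pow_self).le
  have hwx : w ^ (n + 1) * |x| ≤ w ^ n * |x| ^ 2 := by
    rw [pow_succ, sq, mul_assoc]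
    gcongr
  have hlin : ((n + 2 : ℕ) : ℝ) * w ^ (n + 1) * x =
      -(((n + 2 : ℕ) : ℝ) * (w ^ (n + 1) * |x|)) := by
    rw [abs_of_neg (by linarith)]
    ring
  rw [max_eq_left h.le, zero_pow (by omega), hlin]
  linarith [pow_nonneg hw (n + 2), mul_le_mul hk hwx (by positivity) (by positivity),
    mul_le_mul_of_nonneg_left hsingle (by positivity : (0 : ℝ) ≤ 2 ^ (n + 2))]

lemma max_zero_add_pow_le {k : ℕ} (hk : 2 ≤ k) {w R : ℝ} (hw : 0 ≤ w) (hR : 1 ≤ R) (x : ℝ) :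
    max 0 (w + x) ^ k ≤ w ^ k + w ^ (k - 1) * (k * x + k * 2 ^ k * (1 + |x| ^ k) / R) +
      R ^ k * (k * 2 ^ k * (1 + |x| ^ k)) := by
  set T := (w ^ (k - 1) / R + R ^ k) * (1 + |x| ^ k)
  have hT : 0 ≤ T := by positivity
  have hterm : ∀ m ∈ range (k - 1), w ^ m * |x| ^ (k - m) ≤ T := fun m hm => by
    have hm := Finset.mem_range.1 hm
    refine mul_le_mul ?_ (pow_le_one_add_pow (abs_nonneg x) (Nat.sub_le k m)) (by positivity)
      (by positivity)
    exact (pow_le_pow_div_add_pow hw hR hm).trans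
      (add_le_add le_rfl (pow_le_pow_right₀ hR (by omega)))
  have hsum : ∑ m ∈ range (k - 1), w ^ m * |x| ^ (k - m) ≤ k * T := by
    refine (sum_le_sum hterm).trans ?_
    rw [sum_const, card_range, nsmul_eq_mul]
    gcongr
    exact_mod_cast Nat.sub_le k 1
  calc max 0 (w + x) ^ k
      ≤ w ^ k + k * w ^ (k - 1) * x + 2 ^ k * ∑ m ∈ range (k - 1), w ^ m * |x| ^ (k - m) :=
        max_zero_add_pow_le_sum hk hw x
    _ ≤ w ^ k + k * w ^ (k - 1) * x + 2 ^ k * (k * T) := by gcongr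
    _ = _ := by ring

lemma le_two_mul_div_of_succ_le_sub_mul_add {u v : ℕ → ℝ} {c D : ℝ} (hc : 0 < c)
    (hu0 : u 0 = 0) (hu : ∀ N, 0 ≤ u N) (hv : ∀ N, 0 ≤ v N) (hmono : Monotone v)
    (hrec : ∀ N, u (N + 1) ≤ u N - c * v N + D) (N : ℕ) :
    v N ≤ 2 * D / c := by
  have hsum : ∀ M : ℕ, c * ∑ n ∈ range M, v n ≤ M * D - u M := by
    intro M
    induction M with
    | zero => simp [hu0]
    | succ M ih =>
      rw [sum_range_succ]
      push_cast
      linarith [hrec M]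
  have hD : 0 ≤ D := by nlinarith [hrec 0, hu 1, hv 0]
  have htail : ((N : ℝ) + 1) * v N ≤ ∑ n ∈ range (2 * N + 1), v n := by
    rw [← sum_range_add_sum_Ico _ (by omega : N ≤ 2 * N + 1)]
    have := card_nsmul_le_sum (Ico N (2 * N + 1)) v (v N) fun n hn => hmono (mem_Ico.1 hn).1
    rw [Nat.card_Ico, nsmul_eq_mul, show 2 * N + 1 - N = N + 1 by omega] at this
    push_cast at this
    linarith [sum_nonneg fun n (_ : n ∈ range N) => hv n]
  have hM := hsum (2 * N + 1)
  push_cast at hM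
  have hN : ((N : ℝ) + 1) * (v N * c) ≤ ((N : ℝ) + 1) * (2 * D) := by
    nlinarith [hu (2 * N + 1), mul_le_mul_of_nonneg_left htail hc.le]
  rw [le_div_iff₀ hc]
  exact le_of_mul_le_mul_left hN (by positivity)

lemma ENNReal.ofReal_iSup_le {ι : Sort*} [Nonempty ι] (f : ι → ℝ) :
    ENNReal.ofReal (⨆ i, f i) ≤ ⨆ i, ENNReal.ofReal (f i) := by
  rcases eq_or_ne (⨆ i, ENNReal.ofReal (f i)) ⊤ with h | h
  · exact h ▸ le_top
  · rw [ENNReal.ofReal_le_iff_le_toReal h]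
    exact ciSup_le fun i =>
      (ENNReal.ofReal_le_iff_le_toReal h).1 (le_iSup (fun i => ENNReal.ofReal (f i)) i)

section Probability

variable {Ω : Type*} [MeasurableSpace Ω] {P : Measure Ω}

lemma integrable_iSup_of_monotone {H : ℕ → Ω → ℝ} (hH : ∀ n, Integrable (H n) P)
    (h0 : ∀ n ω, 0 ≤ H n ω) (hmono : ∀ ω, Monotone fun n => H n ω) {C : ℝ}
    (hC : ∀ n, ∫ ω, H n ω ∂P ≤ C) :
    Integrable (fun ω => ⨆ n, H n ω) P := by
  refine ⟨(AEMeasurable.iSup fun n => (hH n).aemeasurable).aestronglyMeasurable, ?_⟩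
  rw [hasFiniteIntegral_iff_ofReal (ae_of_all _ fun ω => Real.iSup_nonneg fun n => h0 n ω)]
  refine lt_of_le_of_lt ?_ (ENNReal.ofReal_lt_top (r := C))
  calc ∫⁻ ω, ENNReal.ofReal (⨆ n, H n ω) ∂P
      ≤ ∫⁻ ω, ⨆ n, ENNReal.ofReal (H n ω) ∂P :=
        lintegral_mono fun ω => ENNReal.ofReal_iSup_le _
    _ = ⨆ n, ∫⁻ ω, ENNReal.ofReal (H n ω) ∂P :=
        lintegral_iSup' (fun n => (hH n).aemeasurable.ennreal_ofReal)
          (ae_of_all _ fun ω _ _ hab => ENNReal.ofReal_le_ofReal (hmono ω hab))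
    _ ≤ ENNReal.ofReal C := iSup_le fun n => by
        rw [← ofReal_integral_eq_lintegral_ofReal (hH n) (ae_of_all _ (h0 n))]
        exact ENNReal.ofReal_le_ofReal (hC n)

lemma MeasureTheory.MemLp.integrable_pow_of_nonneg [IsFiniteMeasure P] {f : Ω → ℝ} {k j : ℕ}
    (hf : MemLp f k P) (h0 : ∀ ω, 0 ≤ f ω) (hjk : j ≤ k) :
    Integrable (fun ω => f ω ^ j) P := by
  refine (hf.mono_exponent (by exact_mod_cast hjk)).integrable_norm_pow'.congr
    (ae_of_all _ fun ω => ?_)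
  simp [Real.norm_of_nonneg (h0 ω)]

lemma integral_max_zero_add_pow_le [IsProbabilityMeasure P] {W Y : Ω → ℝ} {k : ℕ} (hk : 2 ≤ k)
    (hW : MemLp W k P) (hW0 : ∀ ω, 0 ≤ W ω) (hY : MemLp Y k P) (hWY : IndepFun W Y P)
    {R : ℝ} (hR : 1 ≤ R) :
    ∫ ω, max 0 (W ω + Y ω) ^ k ∂P ≤ ∫ ω, W ω ^ k ∂P +
      (∫ ω, W ω ^ (k - 1) ∂P) * (k * ∫ ω, Y ω ∂P + (∫ ω, k * 2 ^ k * (1 + |Y ω| ^ k) ∂P) / R) +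
      R ^ k * ∫ ω, k * 2 ^ k * (1 + |Y ω| ^ k) ∂P := by
  set g : ℝ → ℝ := fun x => k * 2 ^ k * (1 + |x| ^ k)
  have hYi : Integrable Y P := hY.integrable (by exact_mod_cast (by omega : 1 ≤ k))
  have hgY : Integrable (fun ω => g (Y ω)) P :=
    ((integrable_const 1).add (by simpa using hY.integrable_norm_pow')).const_mul _
  have hWk : Integrable (fun ω => W ω ^ k) P := hW.integrable_pow_of_nonneg hW0 le_rfl
  have hW1 : Integrable (fun ω => W ω ^ (k - 1)) P :=
    hW.integrable_pow_of_nonneg hW0 (Nat.sub_le k 1)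
  have hh : Integrable (fun ω => k * Y ω + g (Y ω) / R) P :=
    (hYi.const_mul _).add (hgY.div_const _)
  have hind : IndepFun (fun ω => W ω ^ (k - 1)) (fun ω => k * Y ω + g (Y ω) / R) P :=
    hWY.comp (φ := fun w => w ^ (k - 1)) (ψ := fun y => k * y + g y / R) (by fun_prop)
      (by fun_prop)
  have hprod : Integrable (fun ω => W ω ^ (k - 1) * (k * Y ω + g (Y ω) / R)) P :=
    hind.integrable_mul hW1 hh
  have hsum : Integrable (fun ω => W ω ^ k + W ω ^ (k - 1) * (k * Y ω + g (Y ω) / R)) P :=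
    hWk.add hprod
  calc ∫ ω, max 0 (W ω + Y ω) ^ k ∂P
      ≤ ∫ ω, (W ω ^ k + W ω ^ (k - 1) * (k * Y ω + g (Y ω) / R) + R ^ k * g (Y ω)) ∂P :=
        integral_mono_of_nonneg (ae_of_all _ fun ω => pow_nonneg (le_max_left _ _) _)
          (hsum.add (hgY.const_mul _))
          (ae_of_all _ fun ω => max_zero_add_pow_le hk (hW0 ω) hR (Y ω))
    _ = _ := by
        rw [integral_add hsum (hgY.const_mul _), integral_add hWk hprod,
          hind.integral_fun_mul_eq_mul_integral hW1.aestronglyMeasurable hh.aestronglyMeasurable,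
          integral_add (hYi.const_mul _) (hgY.div_const _), integral_const_mul,
          integral_const_mul, integral_div]

end Probability

section Walk

variable {Ω : Type*} {ε : ℝ}

def walkMax (ε : ℝ) (X : ℕ → Ω → ℝ) (N : ℕ) (ω : Ω) : ℝ :=
  partialSups (driftedWalk ε (X · ω)) N

variable {X : ℕ → Ω → ℝ}

lemma walkMax_nonneg (N : ℕ) (ω : Ω) : 0 ≤ walkMax ε X N ω :=
  partialSups_driftedWalk_nonneg N

lemma walkMax_zero : walkMax ε X 0 = 0 := by
  ext ω
  simp [walkMax]

lemma walkMax_succ (N : ℕ) (ω : Ω) :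
    walkMax ε X (N + 1) ω = max 0 (walkMax ε (fun n => X (n + 1)) N ω + (X 0 ω - ε)) :=
  partialSups_driftedWalk_succ N

lemma walkMax_mono (ω : Ω) : Monotone fun N => walkMax ε X N ω :=
  partialSups_monotone _

lemma walkMax_le_sum_residues {L : ℕ} (hL : 0 < L) (N : ℕ) (ω : Ω) :
    walkMax ε X N ω ≤ ∑ r ∈ range L, walkMax ε (fun j => X (r + L * j)) N ω :=
  partialSups_driftedWalk_le_sum_residues _ hL N

variable [MeasurableSpace Ω] {P : Measure Ω}

lemma memLp_walkMax {p : ENNReal} (hX : ∀ i, MemLp (X i) p P) (hε : 0 ≤ ε) (N : ℕ) :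
    MemLp (walkMax ε X N) p P := by
  refine (memLp_finsetSum' (range N) fun i _ => (hX i).abs).mono
    ((measurable_partialSups_driftedWalk ε N).comp_aemeasurable
      (aemeasurable_pi_lambda _ fun i => (hX i).aemeasurable)).aestronglyMeasurable
    (ae_of_all _ fun ω => ?_)
  simp only [Finset.sum_apply, Pi.abs_apply]
  rw [Real.norm_of_nonneg (walkMax_nonneg N ω),
    Real.norm_of_nonneg (sum_nonneg fun i _ => abs_nonneg _)]
  exact partialSups_driftedWalk_le_sum_abs hε N

lemma integral_walkMax_pow_le_sum_residues [IsFiniteMeasure P] {q : ℕ} (hq : 1 ≤ q)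
    (hX : ∀ i, MemLp (X i) q P) (hε : 0 ≤ ε) {L : ℕ} (hL : 0 < L) (N : ℕ) :
    ∫ ω, walkMax ε X N ω ^ q ∂P ≤
      L ^ (q - 1) * ∑ r ∈ range L, ∫ ω, walkMax ε (fun j => X (r + L * j)) N ω ^ q ∂P := by
  obtain ⟨p, rfl⟩ := Nat.exists_eq_add_of_le' hq
  have hint : ∀ r, Integrable (fun ω => walkMax ε (fun j => X (r + L * j)) N ω ^ (p + 1)) P :=
    fun r => (memLp_walkMax (fun j => hX _) hε N).integrable_pow_of_nonneg
      (walkMax_nonneg N) le_rfl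
  rw [← integral_finsetSum _ fun r _ => hint r, ← integral_const_mul, Nat.add_sub_cancel]
  refine integral_mono_of_nonneg (ae_of_all _ fun ω => pow_nonneg (walkMax_nonneg N ω) _)
    ((integrable_finsetSum _ fun r _ => hint r).const_mul _) (ae_of_all _ fun ω => ?_)
  calc walkMax ε X N ω ^ (p + 1)
      ≤ (∑ r ∈ range L, walkMax ε (fun j => X (r + L * j)) N ω) ^ (p + 1) :=
        pow_le_pow_left₀ (walkMax_nonneg N ω) (walkMax_le_sum_residues hL N ω) _
    _ ≤ _ := by
        simpa using pow_sum_le_card_mul_sum_pow (s := range L)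
          (f := fun r => walkMax ε (fun j => X (r + L * j)) N ω) (fun r _ => walkMax_nonneg N ω) p

end Walk

section IndepCopies

variable {Ω : Type*} [MeasurableSpace Ω] {P : Measure Ω} {Z : Ω → ℝ} {ε : ℝ}

structure IsCopiesIndepOfFuture (P : Measure Ω) (Z : Ω → ℝ) (X : ℕ → Ω → ℝ) : Prop where
  identDistrib : ∀ n, IdentDistrib (X n) Z P P
  indepFun_future : ∀ n, IndepFun (X n) (fun ω j => X (j + n + 1) ω) P

namespace IsCopiesIndepOfFuture

variable {X Y : ℕ → Ω → ℝ}

lemma shift (hX : IsCopiesIndepOfFuture P Z X) :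
    IsCopiesIndepOfFuture P Z (fun n => X (n + 1)) :=
  ⟨fun n => hX.identDistrib (n + 1), fun n => hX.indepFun_future (n + 1)⟩

lemma memLp (hX : IsCopiesIndepOfFuture P Z X) {p : ENNReal} (hZ : MemLp Z p P) (n : ℕ) :
    MemLp (X n) p P :=
  (hX.identDistrib n).memLp_iff.2 hZ

lemma indepFun_walkMax_shift (hX : IsCopiesIndepOfFuture P Z X) (N : ℕ) :
    IndepFun (walkMax ε (fun n => X (n + 1)) N) (X 0) P :=
  (hX.indepFun_future 0).symm.comp (measurable_partialSups_driftedWalk ε N) measurable_id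

variable [IsProbabilityMeasure P]

lemma identDistrib_walkMax (hX : IsCopiesIndepOfFuture P Z X)
    (hY : IsCopiesIndepOfFuture P Z Y) (N : ℕ) :
    IdentDistrib (walkMax ε X N) (walkMax ε Y N) P P := by
  induction N generalizing X Y with
  | zero =>
    rw [walkMax_zero, walkMax_zero]
    exact IdentDistrib.refl aemeasurable_const
  | succ N ih =>
    have hpair := (ih hX.shift hY.shift).prodMk
      ((hX.identDistrib 0).trans (hY.identDistrib 0).symm)
      (hX.indepFun_walkMax_shift N) (hY.indepFun_walkMax_shift N)
    have hF : Measurable fun p : ℝ × ℝ => max 0 (p.1 + (p.2 - ε)) := by fun_prop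
    convert hpair.comp hF using 1 <;> ext ω <;> exact walkMax_succ N ω

lemma integral_walkMax_pow_succ_le (hX : IsCopiesIndepOfFuture P Z X) {k : ℕ} (hk : 2 ≤ k)
    (hZ : MemLp Z k P) (hZ0 : ∫ ω, Z ω ∂P = 0) (hε : 0 ≤ ε) {R : ℝ} (hR : 1 ≤ R) (N : ℕ) :
    ∫ ω, walkMax ε X (N + 1) ω ^ k ∂P ≤ ∫ ω, walkMax ε X N ω ^ k ∂P +
      (∫ ω, walkMax ε X N ω ^ (k - 1) ∂P) *
        (k * -ε + (∫ ω, k * 2 ^ k * (1 + |Z ω - ε| ^ k) ∂P) / R) +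
      R ^ k * ∫ ω, k * 2 ^ k * (1 + |Z ω - ε| ^ k) ∂P := by
  have hX0 : IdentDistrib (fun ω => X 0 ω - ε) (fun ω => Z ω - ε) P P :=
    (hX.identDistrib 0).comp (measurable_id.sub_const ε)
  have hmean : ∫ ω, (X 0 ω - ε) ∂P = -ε := by
    rw [hX0.integral_eq, integral_sub (hZ.integrable (by exact_mod_cast (by omega : 1 ≤ k)))
      (integrable_const ε), hZ0]
    simp
  have habs : ∫ ω, k * 2 ^ k * (1 + |X 0 ω - ε| ^ k) ∂P =
      ∫ ω, k * 2 ^ k * (1 + |Z ω - ε| ^ k) ∂P :=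
    (hX0.comp (u := fun x : ℝ => (k : ℝ) * 2 ^ k * (1 + |x| ^ k))
      (continuous_const.mul (continuous_const.add (continuous_abs.pow k))).measurable).integral_eq
  have hlaw : ∀ j : ℕ, ∫ ω, walkMax ε (fun n => X (n + 1)) N ω ^ j ∂P =
      ∫ ω, walkMax ε X N ω ^ j ∂P := fun j =>
    ((hX.shift.identDistrib_walkMax hX N).comp (u := fun x => x ^ j) (by fun_prop)).integral_eq
  have key := integral_max_zero_add_pow_le hk (memLp_walkMax (hX.shift.memLp hZ) hε N)
    (walkMax_nonneg N) (hX0.memLp_iff.2 (hZ.sub (memLp_const ε)))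
    ((hX.indepFun_walkMax_shift N).comp measurable_id (measurable_id.sub_const ε)) hR
  rw [hlaw, hlaw, hmean, habs] at key
  simpa only [walkMax_succ] using key

lemma exists_integral_walkMax_pow_le (hX : IsCopiesIndepOfFuture P Z X) {k : ℕ} (hk : 2 ≤ k)
    (hZ : MemLp Z k P) (hZ0 : ∫ ω, Z ω ∂P = 0) (hε : 0 < ε) :
    ∃ B, ∀ N, ∫ ω, walkMax ε X N ω ^ (k - 1) ∂P ≤ B := by
  set A := ∫ ω, k * 2 ^ k * (1 + |Z ω - ε| ^ k) ∂P
  have hA : 0 ≤ A := integral_nonneg fun ω => by positivity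
  have hkε : 0 < k * ε := by
    have : (0 : ℝ) < k := by exact_mod_cast (by omega : 0 < k)
    positivity
  set R := max 1 (2 * A / (k * ε))
  have hR : 1 ≤ R := le_max_left _ _
  have hAR : A / R ≤ k * ε / 2 := by
    have := le_max_right 1 (2 * A / (k * ε))
    rw [div_le_iff₀ hkε] at this
    rw [div_le_iff₀ (by linarith)]
    nlinarith
  have hint : ∀ j ≤ k, ∀ N, Integrable (fun ω => walkMax ε X N ω ^ j) P := fun j hj N =>
    (memLp_walkMax (hX.memLp hZ) hε.le N).integrable_pow_of_nonneg (walkMax_nonneg N) hj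
  have hmom : ∀ j N, 0 ≤ ∫ ω, walkMax ε X N ω ^ j ∂P := fun j N =>
    integral_nonneg fun ω => pow_nonneg (walkMax_nonneg N ω) _
  have hmono : Monotone fun N => ∫ ω, walkMax ε X N ω ^ (k - 1) ∂P :=
    monotone_nat_of_le_succ fun N => integral_mono (hint _ (Nat.sub_le k 1) N)
      (hint _ (Nat.sub_le k 1) (N + 1)) fun ω =>
        pow_le_pow_left₀ (walkMax_nonneg N ω) (walkMax_mono ω N.le_succ) _
  have hrec : ∀ N, ∫ ω, walkMax ε X (N + 1) ω ^ k ∂P ≤ ∫ ω, walkMax ε X N ω ^ k ∂P -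
      k * ε / 2 * ∫ ω, walkMax ε X N ω ^ (k - 1) ∂P + R ^ k * A := fun N => by
    nlinarith [hX.integral_walkMax_pow_succ_le hk hZ hZ0 hε.le hR N,
      mul_le_mul_of_nonneg_left hAR (hmom (k - 1) N)]
  have hzero : ∫ ω, walkMax ε X 0 ω ^ k ∂P = 0 := by
    simp [walkMax_zero, zero_pow (by omega : k ≠ 0)]
  exact ⟨_, le_two_mul_div_of_succ_le_sub_mul_add (by positivity) hzero (hmom k) (hmom (k - 1))
    hmono hrec⟩

end IsCopiesIndepOfFuture

lemma isCopiesIndepOfFuture_stride {Zi : ℕ → Ω → ℝ} {l : ℕ}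
    (hcopy : ∀ i, IdentDistrib (Zi i) Z P P)
    (hldep : ∀ n : ℕ, IndepFun (fun ω (i : Fin n) => Zi i ω)
      (fun ω (j : {i : ℕ // n + l ≤ i}) => Zi j.1 ω) P) (r : ℕ) :
    IsCopiesIndepOfFuture P Z (fun j => Zi (r + (l + 1) * j)) where
  identDistrib j := hcopy _
  indepFun_future n :=
    (hldep (r + (l + 1) * n + 1)).comp
      (φ := fun v : Fin (r + (l + 1) * n + 1) → ℝ => v (Fin.last _))
      (ψ := fun (v : {i : ℕ // r + (l + 1) * n + 1 + l ≤ i} → ℝ) (j : ℕ) =>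
        v ⟨r + (l + 1) * (j + n + 1), by nlinarith⟩)
      (measurable_pi_apply _) (measurable_pi_lambda _ fun _ => measurable_pi_apply _)

end IndepCopies

theorem stmt14_general {Ω : Type*} [MeasurableSpace Ω] (P : Measure Ω) [IsProbabilityMeasure P]
    (k : ℕ) (hk : 2 ≤ k) (Z : Ω → ℝ) (hZm : Measurable Z)
    (hZk : Integrable (fun ω => |Z ω| ^ k) P) (hZ0 : ∫ ω, Z ω ∂P = 0)
    (Zi : ℕ → Ω → ℝ)
    (hcopy : ∀ i, IdentDistrib (Zi i) Z P P)
    (l : ℕ)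
    (hldep : ∀ n : ℕ,
      IndepFun (fun ω => fun i : Fin n => Zi i ω)
        (fun ω => fun j : {i : ℕ // n + l ≤ i} => Zi j.1 ω) P)
    (ε : ℝ) (hε : 0 < ε) :
    Integrable
      (fun ω => (⨆ n : ℕ, ((∑ i ∈ Finset.range n, Zi i ω) - n * ε)) ^ (k - 1)) P := by
  have hZ : MemLp Z k P := (integrable_norm_rpow_iff hZm.aestronglyMeasurable
    (by simp; omega) (by simp)).1 (by simpa [Real.norm_eq_abs] using hZk)
  have hZi : ∀ i, MemLp (Zi i) (k - 1 : ℕ) P := fun i =>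
    ((hcopy i).memLp_iff.2 hZ).mono_exponent (by exact_mod_cast Nat.sub_le k 1)
  choose B hB using fun r =>
    (isCopiesIndepOfFuture_stride hcopy hldep r).exists_integral_walkMax_pow_le hk hZ hZ0 hε
  have hint : ∀ N, Integrable (fun ω => walkMax ε Zi N ω ^ (k - 1)) P := fun N =>
    (memLp_walkMax hZi hε.le N).integrable_pow_of_nonneg (walkMax_nonneg N) le_rfl
  have hbound : ∀ N, ∫ ω, walkMax ε Zi N ω ^ (k - 1) ∂P ≤
      (l + 1 : ℕ) ^ (k - 1 - 1) * ∑ r ∈ range (l + 1), B r := fun N =>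
    (integral_walkMax_pow_le_sum_residues (by omega) hZi hε.le l.succ_pos N).trans
      (by gcongr with r; exact hB r N)
  refine (integrable_iSup_of_monotone hint (fun N ω => pow_nonneg (walkMax_nonneg N ω) _)
    (fun ω _ _ hab => pow_le_pow_left₀ (walkMax_nonneg _ ω) (walkMax_mono ω hab) _)
    hbound).congr (ae_of_all _ fun ω => ?_)
  dsimp only
  rw [← Real.iSup_pow fun N => walkMax_nonneg N ω]
  exact congrArg (· ^ (k - 1)) (ciSup_partialSups_eq' (fun n => ∑ i ∈ range n, Zi i ω - n * ε))

/-- for an `l`-dependent sequence of copies of a centered random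
variable `Z` with `E|Z|^k < ∞` (`k ≥ 2`), the maximum `M = sup_n (S_n − nε)` has a
finite `(k−1)`-th moment. -/
theorem stmt14 {Ω : Type*} [MeasurableSpace Ω] (P : Measure Ω) [IsProbabilityMeasure P]
    (k : ℕ) (hk : 2 ≤ k) (Z : Ω → ℝ) (hZm : Measurable Z)
    (hZk : Integrable (fun ω => |Z ω| ^ k) P) (hZ0 : ∫ ω, Z ω ∂P = 0)
    (Zi : ℕ → Ω → ℝ) (hZim : ∀ i, Measurable (Zi i))
    (hcopy : ∀ i, IdentDistrib (Zi i) Z P P)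
    (l : ℕ)
    (hldep : ∀ n : ℕ,
      IndepFun (fun ω => fun i : Fin n => Zi i ω)
        (fun ω => fun j : {i : ℕ // n + l ≤ i} => Zi j.1 ω) P)
    (ε : ℝ) (hε : 0 < ε) :
    Integrable
      (fun ω => (⨆ n : ℕ, ((∑ i ∈ Finset.range n, Zi i ω) - n * ε)) ^ (k - 1)) P :=
  stmt14_general P k hk Z hZm hZk hZ0 Zi hcopy l hldep ε hε
end
end

section
/- Let k ≥ 1, S ⊆ ℤ^m a k-dimensional vector semigroup, Z ≥ 0 a random variable with E Z^k < ∞, and (Z_x : x ∈ S) an almost independent family of copies of Z. Then almost surely Z_x / |x| → 0 as x ∈ S, |x| → ∞. -/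
/-!
Since each `Z_x` has the law of `Z`, the expected number of `x ∈ S` with `Z_x ≥ ε|x|` equals
`E #{x ∈ S : ε|x| ≤ Z}`. A `k`-dimensional `S ⊆ ℤ^m` is determined by at most `k` coordinates,
so at most `(2Z/ε + 3)^k` of its points lie in the ball of radius `Z/ε`; this bound has finite
mean because `E Z^k < ∞`. By the first Borel–Cantelli lemma, almost surely only finitely many
`x` have `Z_x ≥ ε|x|`, for each `ε = 1/(n+1)`.
-/

open Set Filter Topology MeasureTheory ProbabilityTheory Pointwise
open scoped ENNReal

noncomputable section

theorem Submodule.exists_finset_card_le_finrank_forall_eq_zero {K ι : Type*} [Field K] [Finite ι]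
    (W : Submodule K (ι → K)) :
    ∃ T : Finset ι, T.card ≤ Module.finrank K W ∧ ∀ v ∈ W, (∀ i ∈ T, v i = 0) → v = 0 := by
  classical
  induction hn : Module.finrank K W using Nat.strong_induction_on generalizing W with
  | _ n ih =>
  rcases eq_or_ne W ⊥ with rfl | hW
  · exact ⟨∅, by simp, fun v hv _ => (Submodule.mem_bot K).1 hv⟩
  obtain ⟨v, hvW, hv0⟩ := Submodule.exists_mem_ne_zero_of_ne_bot hW
  obtain ⟨i, hvi⟩ := Function.ne_iff.1 hv0
  let W' := W ⊓ LinearMap.ker (LinearMap.proj i : (ι → K) →ₗ[K] K)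
  have hlt : W' < W := lt_of_le_of_ne inf_le_left fun h => hvi (h ▸ hvW : v ∈ W').2
  have hrank : Module.finrank K W' < n := hn ▸ Submodule.finrank_lt_finrank_of_lt hlt
  obtain ⟨T, hT, hsep⟩ := ih _ hrank W' rfl
  refine ⟨insert i T, (Finset.card_insert_le _ _).trans (by omega), fun u hu h0 => ?_⟩
  exact hsep u ⟨hu, h0 i (Finset.mem_insert_self _ _)⟩ fun j hj =>
    h0 j (Finset.mem_insert_of_mem hj)

lemma exists_finset_card_le_finrank_span_eq_of_coords_eq {m : ℕ} (S : Set (Fin m → ℤ)) :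
    ∃ T : Finset (Fin m), T.card ≤ Module.finrank ℝ (Submodule.span ℝ (zc '' S)) ∧
      ∀ x ∈ S, ∀ y ∈ S, (∀ i ∈ T, x i = y i) → x = y := by
  obtain ⟨T, hT, hsep⟩ := (Submodule.span ℝ (zc '' S)).exists_finset_card_le_finrank_forall_eq_zero
  refine ⟨T, hT, fun x hx y hy hxy => funext fun i => ?_⟩
  have hmem : zc x - zc y ∈ Submodule.span ℝ (zc '' S) :=
    Submodule.sub_mem _ (Submodule.subset_span ⟨x, hx, rfl⟩) (Submodule.subset_span ⟨y, hy, rfl⟩)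
  have h0 := congr_fun (hsep _ hmem fun j hj => by simp [zc, hxy j hj]) i
  simpa [zc, sub_eq_zero] using h0

lemma encard_setOf_norm_le_natCast_le {m : ℕ} {S : Set (Fin m → ℤ)} {T : Finset (Fin m)}
    (hT : ∀ x ∈ S, ∀ y ∈ S, (∀ i ∈ T, x i = y i) → x = y) (N : ℕ) :
    {x ∈ S | ‖zc x‖ ≤ N}.encard ≤ ((2 * N + 1) ^ T.card : ℕ) := by
  let box := Fintype.piFinset fun _ : T => Finset.Icc (-(N : ℤ)) N
  let restrict : (Fin m → ℤ) → T → ℤ := fun x i => x i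
  have hinj : Set.InjOn restrict {x ∈ S | ‖zc x‖ ≤ N} := fun x hx y hy hxy =>
    hT x hx.1 y hy.1 fun i hi => congr_fun hxy ⟨i, hi⟩
  have hmaps : restrict '' {x ∈ S | ‖zc x‖ ≤ N} ⊆ box := by
    rintro _ ⟨x, ⟨-, hx⟩, rfl⟩
    simp only [box, Fintype.coe_piFinset, Set.mem_univ_pi, Finset.coe_Icc, Set.mem_Icc]
    intro i
    have : |(x i : ℝ)| ≤ N := (norm_le_pi_norm (zc x) i).trans hx
    exact_mod_cast abs_le.1 this
  calc {x ∈ S | ‖zc x‖ ≤ N}.encard = (restrict '' {x ∈ S | ‖zc x‖ ≤ N}).encard :=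
        hinj.encard_image.symm
    _ ≤ (box : Set (T → ℤ)).encard := Set.encard_le_encard hmaps
    _ = ((2 * N + 1) ^ T.card : ℕ) := by
        rw [Set.encard_coe_eq_coe_finsetCard]
        simp only [box, Fintype.card_piFinset, Int.card_Icc, Finset.prod_const, Finset.card_univ,
          Fintype.card_coe]
        norm_cast
        congr 1
        omega

lemma encard_setOf_norm_le_le {m k : ℕ} {S : Set (Fin m → ℤ)}
    (hdim : Module.finrank ℝ (Submodule.span ℝ (zc '' S)) ≤ k) {r : ℝ} (hr : 0 ≤ r) :
    ({x ∈ S | ‖zc x‖ ≤ r}.encard : ℝ≥0∞) ≤ ENNReal.ofReal ((2 * r + 3) ^ k) := by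
  obtain ⟨T, hT, hsep⟩ := exists_finset_card_le_finrank_span_eq_of_coords_eq S
  set N := ⌈r⌉₊
  have hsub : {x ∈ S | ‖zc x‖ ≤ r} ⊆ {x ∈ S | ‖zc x‖ ≤ N} :=
    fun x hx => ⟨hx.1, hx.2.trans (Nat.le_ceil r)⟩
  have hN : ((2 * N + 1 : ℕ) : ℝ) ≤ 2 * r + 3 := by
    push_cast
    linarith [Nat.ceil_lt_add_one hr]
  calc ({x ∈ S | ‖zc x‖ ≤ r}.encard : ℝ≥0∞)
      ≤ ({x ∈ S | ‖zc x‖ ≤ N}.encard : ℝ≥0∞) := by gcongr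
    _ ≤ (((2 * N + 1) ^ T.card : ℕ) : ℝ≥0∞) := by
        exact_mod_cast encard_setOf_norm_le_natCast_le hsep N
    _ = ENNReal.ofReal (((2 * N + 1 : ℕ) : ℝ) ^ T.card) := by
        rw [← ENNReal.ofReal_natCast]
        push_cast
        rfl
    _ ≤ ENNReal.ofReal ((2 * r + 3) ^ k) := by
        refine ENNReal.ofReal_le_ofReal ((pow_le_pow_right₀ ?_ (hT.trans hdim)).trans ?_)
        · exact_mod_cast Nat.le_add_left 1 _
        · exact pow_le_pow_left₀ (Nat.cast_nonneg _) hN k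

lemma integrable_mul_add_pow {Ω : Type*} [MeasurableSpace Ω] {μ : Measure Ω} [IsFiniteMeasure μ]
    {Z : Ω → ℝ} {k : ℕ} (hZm : AEStronglyMeasurable Z μ) (hZnn : 0 ≤ᵐ[μ] Z)
    (hZk : Integrable (fun ω => Z ω ^ k) μ) {a b : ℝ} (ha : 0 ≤ a) (hb : 0 ≤ b) :
    Integrable (fun ω => (a * Z ω + b) ^ k) μ := by
  refine (((hZk.const_mul (a ^ k)).add (integrable_const (b ^ k))).const_mul (2 ^ (k - 1))).mono'
    (((hZm.const_mul a).add_const b).pow k) ?_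
  filter_upwards [hZnn] with ω (hω : 0 ≤ Z ω)
  have hab : 0 ≤ a * Z ω + b := by positivity
  rw [Real.norm_eq_abs, abs_of_nonneg (pow_nonneg hab k)]
  calc (a * Z ω + b) ^ k ≤ 2 ^ (k - 1) * ((a * Z ω) ^ k + b ^ k) :=
        add_pow_le (mul_nonneg ha hω) hb k
    _ = 2 ^ (k - 1) * (a ^ k * Z ω ^ k + b ^ k) := by rw [mul_pow]

theorem ae_finite_setOf_le_of_identDistrib {Ω ι : Type*} [MeasurableSpace Ω] {μ : Measure Ω}
    [Countable ι] {s : Set ι} {Y : ι → Ω → ℝ} {Z : Ω → ℝ} (hZ : Measurable Z)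
    (hY : ∀ i ∈ s, IdentDistrib (Y i) Z μ μ) (t : ι → ℝ)
    (h : ∫⁻ ω, ({i ∈ s | t i ≤ Z ω}.encard : ℝ≥0∞) ∂μ ≠ ∞) :
    ∀ᵐ ω ∂μ, {i ∈ s | t i ≤ Y i ω}.Finite := by
  classical
  let E : ι → Set Ω := fun i => {ω | i ∈ s ∧ t i ≤ Z ω}
  have hE : ∀ i, MeasurableSet (E i) := fun i =>
    (MeasurableSet.const (i ∈ s)).inter (measurableSet_le measurable_const hZ)
  have hlaw : ∀ i, μ {ω | i ∈ s ∧ t i ≤ Y i ω} = ∫⁻ ω, (E i).indicator 1 ω ∂μ := by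
    intro i
    rw [lintegral_indicator_one (hE i)]
    by_cases hi : i ∈ s
    · simp only [E, hi, true_and]
      exact (hY i hi).measure_mem_eq measurableSet_Ici
    · simp [E, hi]
  have hcount : ∀ ω, ∑' i, (E i).indicator 1 ω = ({i ∈ s | t i ≤ Z ω}.encard : ℝ≥0∞) := by
    intro ω
    rw [← ENNReal.tsum_set_one, tsum_subtype _ fun _ => (1 : ℝ≥0∞)]
    rfl
  refine ae_finite_setOfPred_mem (s := fun i => {ω | i ∈ s ∧ t i ≤ Y i ω}) ?_
  rwa [tsum_congr hlaw, ← lintegral_tsum fun i => (measurable_one.indicator (hE i)).aemeasurable,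
    funext hcount]

lemma lintegral_encard_setOf_mul_norm_le_ne_top {Ω : Type*} [MeasurableSpace Ω] {μ : Measure Ω}
    [IsFiniteMeasure μ] {m k : ℕ} {S : Set (Fin m → ℤ)}
    (hdim : Module.finrank ℝ (Submodule.span ℝ (zc '' S)) ≤ k)
    {Z : Ω → ℝ} (hZm : Measurable Z) (hZnn : ∀ ω, 0 ≤ Z ω)
    (hZk : Integrable (fun ω => Z ω ^ k) μ) {δ : ℝ} (hδ : 0 < δ) :
    ∫⁻ ω, ({x ∈ S | δ * ‖zc x‖ ≤ Z ω}.encard : ℝ≥0∞) ∂μ ≠ ∞ := by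
  have hbound : ∀ ω, ({x ∈ S | δ * ‖zc x‖ ≤ Z ω}.encard : ℝ≥0∞)
      ≤ ENNReal.ofReal ((2 * δ⁻¹ * Z ω + 3) ^ k) := by
    intro ω
    have hset : {x ∈ S | δ * ‖zc x‖ ≤ Z ω} = {x ∈ S | ‖zc x‖ ≤ δ⁻¹ * Z ω} := by
      ext x
      simp [le_inv_mul_iff₀ hδ]
    rw [hset, mul_assoc]
    exact encard_setOf_norm_le_le hdim (by have := hZnn ω; positivity)
  have hint : Integrable (fun ω => (2 * δ⁻¹ * Z ω + 3) ^ k) μ :=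
    integrable_mul_add_pow hZm.aestronglyMeasurable (Eventually.of_forall hZnn) hZk
      (by positivity) (by norm_num)
  exact ((lintegral_mono hbound).trans_lt hint.lintegral_lt_top).ne

lemma exists_forall_div_lt_of_finite {α : Type*} {s : Set α} {f g : α → ℝ} {ε : ℝ}
    (h : {x ∈ s | ε * f x ≤ g x}.Finite) : ∃ R, ∀ x ∈ s, R ≤ f x → g x / f x < ε := by
  obtain ⟨b, hb⟩ := (h.image f).bddAbove
  refine ⟨max b 0 + 1, fun x hx hxR => ?_⟩
  have hfx : b < f x := by linarith [le_max_left b 0]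
  have hfpos : 0 < f x := by linarith [le_max_right b 0]
  rw [div_lt_iff₀ hfpos]
  by_contra! hle
  exact hfx.not_ge (hb ⟨x, ⟨hx, by linarith⟩, rfl⟩)

theorem stmt15_general {m k : ℕ}
    {Ω : Type*} [MeasurableSpace Ω] (P : Measure Ω) [IsProbabilityMeasure P]
    (S : Set (Fin m → ℤ))
    (hdim : Module.finrank ℝ (Submodule.span ℝ (zc '' S)) = k)
    (Z : Ω → ℝ) (hZm : Measurable Z) (hZnn : ∀ ω, 0 ≤ Z ω)
    (hZk : Integrable (fun ω => Z ω ^ k) P)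
    (Zf : (Fin m → ℤ) → Ω → ℝ)
    (hcopy : ∀ x ∈ S, IdentDistrib (Zf x) Z P P) :
    ∀ᵐ ω ∂P, ∀ ε : ℝ, 0 < ε → ∃ R : ℝ, ∀ x ∈ S, R ≤ ‖zc x‖ →
      |Zf x ω| / ‖zc x‖ < ε := by
  have habs : ∀ x ∈ S, IdentDistrib (fun ω => |Zf x ω|) Z P P := fun x hx => by
    have hZabs : abs ∘ Z = Z := funext fun ω => abs_of_nonneg (hZnn ω)
    exact hZabs ▸ (hcopy x hx).comp measurable_abs
  have hfin : ∀ n : ℕ, ∀ᵐ ω ∂P, {x ∈ S | 1 / (n + 1 : ℝ) * ‖zc x‖ ≤ |Zf x ω|}.Finite :=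
    fun n => ae_finite_setOf_le_of_identDistrib hZm habs _ <|
      lintegral_encard_setOf_mul_norm_le_ne_top hdim.le hZm hZnn hZk Nat.one_div_pos_of_nat
  filter_upwards [ae_all_iff.2 hfin] with ω hω ε hε
  obtain ⟨n, hn⟩ := exists_nat_one_div_lt hε
  obtain ⟨R, hR⟩ := exists_forall_div_lt_of_finite (hω n)
  exact ⟨R, fun x hx hxR => (hR x hx hxR).trans hn⟩

/-- for a `k`-dimensional vector semigroup `S` and an almost
independent family `(Z_x : x ∈ S)` of copies of a nonnegative `Z` with `EZ^k < ∞`,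
almost surely `Z_x/|x| → 0` as `|x| → ∞` along `S`. -/
theorem stmt15 {m k : ℕ} (hk : 1 ≤ k)
    {Ω : Type*} [MeasurableSpace Ω] (P : Measure Ω) [IsProbabilityMeasure P]
    (S : Set (Fin m → ℤ)) (hSne : S.Nonempty)
    (hSadd : ∀ x ∈ S, ∀ y ∈ S, x + y ∈ S)
    (hdim : Module.finrank ℝ (Submodule.span ℝ (zc '' S)) = k)
    (Z : Ω → ℝ) (hZm : Measurable Z) (hZnn : ∀ ω, 0 ≤ Z ω)
    (hZk : Integrable (fun ω => Z ω ^ k) P)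
    (Zf : (Fin m → ℤ) → Ω → ℝ) (hZfm : ∀ x ∈ S, Measurable (Zf x))
    (hcopy : ∀ x ∈ S, IdentDistrib (Zf x) Z P P)
    (hai : ∃ c : ℝ, ∀ A B : Set (Fin m → ℤ), A ⊆ S → B ⊆ S →
      (∀ x ∈ A, ∀ y ∈ B, c < ‖zc x - zc y‖) →
      IndepFun (fun ω => fun x : A => Zf x.1 ω) (fun ω => fun y : B => Zf y.1 ω) P) :
    ∀ᵐ ω ∂P, ∀ ε : ℝ, 0 < ε → ∃ R : ℝ, ∀ x ∈ S, R ≤ ‖zc x‖ →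
      |Zf x ω| / ‖zc x‖ < ε :=
  stmt15_general P S hdim Z hZm hZnn hZk Zf hcopy
end
end

section
/- Let f = (f^x : x ∈ S) be an ergodic measure-preserving action of a vector semigroup S ⊆ ℤ^m on a probability space (Ω, P), and let h be an f-subadditive random function on S with E h(x)^+ < ∞ for all x ∈ S. Define q(x) as the almost-sure (constant) limit of h(nx)/n given by the Kingman subadditive ergodic theorem. Then q is a ℤ-gauge on S: q(x+y) ≤ q(x) + q(y) and q(tx) = t·q(x) for all x, y ∈ S and t ∈ ℕ. -/
/-!
Write `h⁺ = max h 0`. Subadditivity along multiples of `x` bounds `h((n+1)x)⁺` by the Birkhoff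
sum of `h(x)⁺` over `f^x`, so `E h((n+1)x)⁺ / (n+1) ≤ E h(x)⁺`, and Fatou's lemma rules out
`q(x) = ⊤`; this finiteness is needed because `⊤ + ⊥ = ⊥` in `EReal`.
If `q(x+y) > a + b` with real `a > q(x)` and `b > q(y)`, then for large `n` each of the events
`h(nx) < na`, `h(ny) ∘ f^{nx} < nb` (as likely as `h(ny) < nb`, since `f^{nx}` preserves `P`)
and `h(n(x+y)) > n(a+b)` has probability close to `1`, so they occur together, contradicting
`h(n(x+y)) ≤ h(nx) + h(ny) ∘ f^{nx}`. Homogeneity holds because `h(n(tx))/n` is `t` times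
the subsequence `h(tn x)/(tn)`.
-/

open Set Filter Topology MeasureTheory ProbabilityTheory Pointwise

noncomputable section

open scoped ENNReal

section Events

variable {Ω ι : Type*} [MeasurableSpace Ω] {μ : Measure Ω} {l : Filter ι} {s t : ι → Set Ω}

lemma tendsto_measure_compl_of_ae_eventually_mem [IsFiniteMeasure μ] [l.IsCountablyGenerated]
    (hs : ∀ i, MeasurableSet (s i)) (h : ∀ᵐ ω ∂μ, ∀ᶠ i in l, ω ∈ s i) :
    Tendsto (fun i => μ (s i)ᶜ) l (𝓝 0) := by
  simpa using tendsto_measure_of_ae_tendsto_indicator_of_isFiniteMeasure l MeasurableSet.empty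
    (fun i => (hs i).compl) (h.mono fun ω hω => hω.mono fun i hi => by simpa using hi)

lemma tendsto_measure_compl_inter (hs : Tendsto (fun i => μ (s i)ᶜ) l (𝓝 0))
    (ht : Tendsto (fun i => μ (t i)ᶜ) l (𝓝 0)) :
    Tendsto (fun i => μ (s i ∩ t i)ᶜ) l (𝓝 0) := by
  refine tendsto_of_tendsto_of_tendsto_of_le_of_le tendsto_const_nhds
    (by simpa using hs.add ht) (fun _ => zero_le) fun i => ?_
  rw [compl_inter]
  exact measure_union_le _ _

lemma eventually_nonempty_of_tendsto_measure_compl [NeZero μ]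
    (hs : Tendsto (fun i => μ (s i)ᶜ) l (𝓝 0)) : ∀ᶠ i in l, (s i).Nonempty := by
  filter_upwards [hs.eventually_lt_const (Measure.measure_univ_pos.2 (NeZero.ne μ))] with i hi
  rw [nonempty_iff_ne_empty]
  rintro hempty
  simp [hempty] at hi

end Events

section LimitsOfRandomSequences

variable {Ω : Type*} [MeasurableSpace Ω] {μ : Measure Ω}

lemma lt_add_of_ae_eventually_of_le_add_comp [IsFiniteMeasure μ] [NeZero μ]
    {a b c : ℕ → Ω → ℝ} {T : ℕ → Ω → Ω} (hT : ∀ n, MeasurePreserving (T n) μ μ)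
    (ha : ∀ n, Measurable (a n)) (hb : ∀ n, Measurable (b n)) (hc : ∀ n, Measurable (c n))
    (habc : ∀ n ω, c n ω ≤ a n ω + b n (T n ω)) {α β γ : ℝ}
    (ha_lt : ∀ᵐ ω ∂μ, ∀ᶠ n in atTop, a n ω < α) (hb_lt : ∀ᵐ ω ∂μ, ∀ᶠ n in atTop, b n ω < β)
    (hc_gt : ∀ᵐ ω ∂μ, ∀ᶠ n in atTop, γ < c n ω) : γ < α + β := by
  have hA := tendsto_measure_compl_of_ae_eventually_mem
    (fun n => measurableSet_lt (ha n) measurable_const) ha_lt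
  have hB := tendsto_measure_compl_of_ae_eventually_mem
    (fun n => measurableSet_lt (hb n) measurable_const) hb_lt
  have hC := tendsto_measure_compl_of_ae_eventually_mem
    (fun n => measurableSet_lt measurable_const (hc n)) hc_gt
  have hB' : Tendsto (fun n => μ (T n ⁻¹' {ω | b n ω < β})ᶜ) atTop (𝓝 0) := by
    refine hB.congr fun n => ?_
    rw [← preimage_compl, (hT n).measure_preimage
      (measurableSet_lt (hb n) measurable_const).compl.nullMeasurableSet]
  obtain ⟨n, ω, ⟨hωa, hωb⟩, hωc⟩ :=
    (eventually_nonempty_of_tendsto_measure_compl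
      (tendsto_measure_compl_inter (tendsto_measure_compl_inter hA hB') hC)).exists
  linarith [habc n ω, show a n ω < α from hωa, show b n (T n ω) < β from hωb,
    show γ < c n ω from hωc]

lemma le_add_of_ae_tendsto_of_le_add_comp [IsFiniteMeasure μ] [NeZero μ]
    {a b c : ℕ → Ω → ℝ} {T : ℕ → Ω → Ω} (hT : ∀ n, MeasurePreserving (T n) μ μ)
    (ha : ∀ n, Measurable (a n)) (hb : ∀ n, Measurable (b n)) (hc : ∀ n, Measurable (c n))
    (habc : ∀ n ω, c n ω ≤ a n ω + b n (T n ω)) {A B C : EReal} (hA : A ≠ ⊤) (hB : B ≠ ⊤)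
    (ha_lim : ∀ᵐ ω ∂μ, Tendsto (fun n => (a n ω : EReal)) atTop (𝓝 A))
    (hb_lim : ∀ᵐ ω ∂μ, Tendsto (fun n => (b n ω : EReal)) atTop (𝓝 B))
    (hc_lim : ∀ᵐ ω ∂μ, Tendsto (fun n => (c n ω : EReal)) atTop (𝓝 C)) :
    C ≤ A + B := by
  refine EReal.le_add_of_forall_gt (.inr hB) (.inl hA) fun α hα β hβ => ?_
  induction α using EReal.rec with
  | bot => exact absurd hα not_lt_bot
  | top => rw [EReal.top_add_of_ne_bot hβ.ne_bot]; exact le_top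
  | coe α =>
  induction β using EReal.rec with
  | bot => exact absurd hβ not_lt_bot
  | top => rw [EReal.add_top_of_ne_bot hα.ne_bot]; exact le_top
  | coe β =>
  by_contra! hlt
  rw [← EReal.coe_add] at hlt
  refine (lt_add_of_ae_eventually_of_le_add_comp (α := α) (β := β) hT ha hb hc habc
    (ha_lim.mono fun ω hω => ?_) (hb_lim.mono fun ω hω => ?_)
    (hc_lim.mono fun ω hω => ?_)).false
  · exact (hω.eventually_lt_const hα).mono fun n => EReal.coe_lt_coe_iff.1
  · exact (hω.eventually_lt_const hβ).mono fun n => EReal.coe_lt_coe_iff.1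
  · exact (hω.eventually_const_lt hlt).mono fun n => EReal.coe_lt_coe_iff.1

lemma ne_top_of_ae_tendsto_of_lintegral_ofReal_le [NeZero μ] {u : ℕ → Ω → ℝ}
    (hu : ∀ n, AEMeasurable (u n) μ) {K : ℝ≥0∞} (hK : K ≠ ⊤)
    (hbound : ∀ n, ∫⁻ ω, ENNReal.ofReal (u n ω) ∂μ ≤ K) {L : EReal}
    (hL : ∀ᵐ ω ∂μ, Tendsto (fun n => (u n ω : EReal)) atTop (𝓝 L)) : L ≠ ⊤ := by
  rintro rfl
  have hliminf : ∀ᵐ ω ∂μ, liminf (fun n => ENNReal.ofReal (u n ω)) atTop = ⊤ :=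
    hL.mono fun ω hω =>
      (ENNReal.tendsto_ofReal_atTop.comp (EReal.tendsto_coe_nhds_top_iff.1 hω)).liminf_eq
  have hfatou := lintegral_liminf_le' (μ := μ) (u := atTop) fun n => (hu n).ennreal_ofReal
  rw [lintegral_congr_ae hliminf, lintegral_const, ENNReal.top_mul (NeZero.ne _)] at hfatou
  exact hK (top_le_iff.1 (hfatou.trans (liminf_le_of_frequently_le' (.of_forall hbound))))

end LimitsOfRandomSequences

lemma EReal.tendsto_comp_mul_div {u : ℕ → ℝ} {L : EReal}
    (hu : Tendsto (fun n => ((u n / n : ℝ) : EReal)) atTop (𝓝 L)) {t : ℕ} (ht : 0 < t) :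
    Tendsto (fun n => ((u (t * n) / n : ℝ) : EReal)) atTop (𝓝 ((t : ℝ) * L)) := by
  refine (EReal.Tendsto.const_mul (hu.comp (tendsto_id.const_mul_atTop' ht))
    (.inl (EReal.coe_ne_bot _)) (.inl (EReal.coe_ne_top _))).congr fun n => ?_
  rw [Function.comp_apply, id, ← EReal.coe_mul]
  congr 1
  rcases n.eq_zero_or_pos with rfl | hn
  · simp
  · push_cast
    field_simp

section Cocycle

variable {M Ω : Type*} [AddMonoid M] {S : Set M} {f : M → Ω → Ω} {h : M → Ω → ℝ} {x : M}

lemma succ_nsmul_mem (hS : ∀ x ∈ S, ∀ y ∈ S, x + y ∈ S) (hx : x ∈ S) (n : ℕ) :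
    (n + 1) • x ∈ S := by
  induction n with
  | zero => simpa using hx
  | succ n ih => rw [succ_nsmul]; exact hS _ ih _ hx

lemma act_succ_nsmul_eq_iterate (hS : ∀ x ∈ S, ∀ y ∈ S, x + y ∈ S)
    (hact : ∀ x ∈ S, ∀ y ∈ S, f (x + y) = f x ∘ f y) (hx : x ∈ S) (n : ℕ) :
    f ((n + 1) • x) = (f x)^[n + 1] := by
  induction n with
  | zero => simp
  | succ n ih =>
    rw [succ_nsmul _ (n + 1), hact _ (succ_nsmul_mem hS hx n) _ hx, ih]
    exact (Function.iterate_succ _ _).symm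

lemma ofReal_succ_nsmul_le_sum_iterate (hS : ∀ x ∈ S, ∀ y ∈ S, x + y ∈ S)
    (hact : ∀ x ∈ S, ∀ y ∈ S, f (x + y) = f x ∘ f y)
    (hsub : ∀ x ∈ S, ∀ y ∈ S, ∀ ω, h (x + y) ω ≤ h x ω + h y (f x ω)) (hx : x ∈ S)
    (n : ℕ) (ω : Ω) :
    ENNReal.ofReal (h ((n + 1) • x) ω) ≤
      ∑ k ∈ Finset.range (n + 1), ENNReal.ofReal (h x ((f x)^[k] ω)) := by
  induction n with
  | zero => simp
  | succ n ih =>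
    rw [Finset.sum_range_succ, ← act_succ_nsmul_eq_iterate hS hact hx n]
    calc ENNReal.ofReal (h ((n + 1 + 1) • x) ω)
        ≤ ENNReal.ofReal (h ((n + 1) • x) ω + h x (f ((n + 1) • x) ω)) := by
          rw [succ_nsmul _ (n + 1)]
          exact ENNReal.ofReal_le_ofReal (hsub _ (succ_nsmul_mem hS hx n) _ hx ω)
      _ ≤ _ := ENNReal.ofReal_add_le.trans (by gcongr)

lemma lintegral_ofReal_succ_nsmul_div_le [MeasurableSpace Ω] {μ : Measure Ω}
    (hS : ∀ x ∈ S, ∀ y ∈ S, x + y ∈ S)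
    (hact : ∀ x ∈ S, ∀ y ∈ S, f (x + y) = f x ∘ f y)
    (hsub : ∀ x ∈ S, ∀ y ∈ S, ∀ ω, h (x + y) ω ≤ h x ω + h y (f x ω)) (hx : x ∈ S)
    (hfx : MeasurePreserving (f x) μ μ) (hhx : Measurable (h x)) (n : ℕ) :
    ∫⁻ ω, ENNReal.ofReal (h ((n + 1) • x) ω / (n + 1 : ℕ)) ∂μ ≤
      ∫⁻ ω, ENNReal.ofReal (h x ω) ∂μ := by
  have hsum : ∫⁻ ω, ENNReal.ofReal (h ((n + 1) • x) ω) ∂μ ≤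
      (n + 1 : ℕ) * ∫⁻ ω, ENNReal.ofReal (h x ω) ∂μ :=
    calc _ ≤ ∫⁻ ω, ∑ k ∈ Finset.range (n + 1), ENNReal.ofReal (h x ((f x)^[k] ω)) ∂μ :=
          lintegral_mono (ofReal_succ_nsmul_le_sum_iterate hS hact hsub hx n)
      _ = ∑ k ∈ Finset.range (n + 1), ∫⁻ ω, ENNReal.ofReal (h x ((f x)^[k] ω)) ∂μ :=
          lintegral_finsetSum _ fun k _ => hhx.ennreal_ofReal.comp (hfx.iterate k).measurable
      _ = (n + 1 : ℕ) * ∫⁻ ω, ENNReal.ofReal (h x ω) ∂μ := by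
          simp [(hfx.iterate _).lintegral_comp hhx.ennreal_ofReal]
  have hN : (0 : ℝ) < (n + 1 : ℕ) := by positivity
  simp_rw [ENNReal.ofReal_div_of_pos hN, div_eq_mul_inv]
  rw [lintegral_mul_const' _ _ (ENNReal.inv_ne_top.2 (ENNReal.ofReal_pos.2 hN).ne'),
    ← div_eq_mul_inv, ENNReal.ofReal_natCast]
  exact ENNReal.div_le_of_le_mul (hsum.trans_eq (mul_comm _ _))

end Cocycle

theorem stmt16_general {m : ℕ} {Ω : Type*} [MeasurableSpace Ω] (P : Measure Ω)
    [IsProbabilityMeasure P]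
    (S : Set (Fin m → ℤ))
    (hSadd : ∀ x ∈ S, ∀ y ∈ S, x + y ∈ S)
    (f : (Fin m → ℤ) → Ω → Ω)
    (hact : ∀ x ∈ S, ∀ y ∈ S, f (x + y) = f x ∘ f y)
    (hmp : ∀ x ∈ S, MeasurePreserving (f x) P P)
    (h : (Fin m → ℤ) → Ω → ℝ) (hhm : ∀ x ∈ S, Measurable (h x))
    (hsub : ∀ x ∈ S, ∀ y ∈ S, ∀ ω, h (x + y) ω ≤ h x ω + h y (f x ω))
    (hint : ∀ x ∈ S, Integrable (fun ω => max (h x ω) 0) P)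
    (q : (Fin m → ℤ) → EReal)
    (hq : ∀ x ∈ S, ∀ᵐ ω ∂P,
      Tendsto (fun n : ℕ => ((h (n • x) ω / n : ℝ) : EReal)) atTop (nhds (q x))) :
    (∀ x ∈ S, ∀ y ∈ S, q (x + y) ≤ q x + q y) ∧
    (∀ x ∈ S, ∀ t : ℕ, 0 < t → q (t • x) = ((t : ℝ) : EReal) * q x) := by
  have hmem := fun x (hx : x ∈ S) => succ_nsmul_mem hSadd hx
  have hmeas : ∀ x ∈ S, ∀ n : ℕ, Measurable fun ω => h ((n + 1) • x) ω / (n + 1 : ℕ) :=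
    fun x hx n => (hhm _ (hmem x hx n)).div_const _
  -- Shifting `n` to `n + 1` keeps every multiple `n • x` inside `S`.
  have hq' : ∀ x ∈ S, ∀ᵐ ω ∂P, Tendsto
      (fun n : ℕ => ((h ((n + 1) • x) ω / (n + 1 : ℕ) : ℝ) : EReal)) atTop (𝓝 (q x)) :=
    fun x hx => (hq x hx).mono fun ω hω => (tendsto_add_atTop_iff_nat 1).2 hω
  have hq_ne_top : ∀ x ∈ S, q x ≠ ⊤ := fun x hx =>
    ne_top_of_ae_tendsto_of_lintegral_ofReal_le (fun n => (hmeas x hx n).aemeasurable)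
      (by simpa using (hint x hx).lintegral_lt_top.ne)
      (lintegral_ofReal_succ_nsmul_div_le hSadd hact hsub hx (hmp x hx) (hhm x hx)) (hq' x hx)
  refine ⟨fun x hx y hy => ?_, fun x hx t ht => ?_⟩
  · refine le_add_of_ae_tendsto_of_le_add_comp (fun n => hmp _ (hmem x hx n)) (hmeas x hx)
      (hmeas y hy) (hmeas _ (hSadd x hx y hy)) (fun n ω => ?_) (hq_ne_top x hx)
      (hq_ne_top y hy) (hq' x hx) (hq' y hy) (hq' _ (hSadd x hx y hy))
    rw [smul_add, ← add_div]
    exact div_le_div_of_nonneg_right (hsub _ (hmem x hx n) _ (hmem y hy n) ω) (Nat.cast_nonneg _)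
  · obtain ⟨k, rfl⟩ : ∃ k, t = k + 1 := ⟨t - 1, by omega⟩
    obtain ⟨ω, hωx, hωtx⟩ := ((hq x hx).and (hq _ (hmem x hx k))).exists
    refine tendsto_nhds_unique hωtx ?_
    simpa only [← mul_nsmul] using EReal.tendsto_comp_mul_div hωx ht

/-- the limit function `q(x) = lim h(nx)/n` of an `f`-subadditive
random function `h` (with `E h(x)⁺ < ∞`) under an ergodic measure-preserving action
is a ℤ-gauge on `S`. -/
theorem stmt16 {m : ℕ} {Ω : Type*} [MeasurableSpace Ω] (P : Measure Ω)
    [IsProbabilityMeasure P]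
    (S : Set (Fin m → ℤ)) (hSne : S.Nonempty)
    (hSadd : ∀ x ∈ S, ∀ y ∈ S, x + y ∈ S)
    (f : (Fin m → ℤ) → Ω → Ω) (hfm : ∀ x ∈ S, Measurable (f x))
    (hact : ∀ x ∈ S, ∀ y ∈ S, f (x + y) = f x ∘ f y)
    (hid : (0 : Fin m → ℤ) ∈ S → f 0 = id)
    (hmp : ∀ x ∈ S, MeasurePreserving (f x) P P)
    (herg : ∀ x ∈ S, x ≠ 0 → Ergodic (f x) P)
    (h : (Fin m → ℤ) → Ω → ℝ) (hhm : ∀ x ∈ S, Measurable (h x))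
    (hh0 : (0 : Fin m → ℤ) ∈ S → ∀ ω, h 0 ω = 0)
    (hsub : ∀ x ∈ S, ∀ y ∈ S, ∀ ω, h (x + y) ω ≤ h x ω + h y (f x ω))
    (hint : ∀ x ∈ S, Integrable (fun ω => max (h x ω) 0) P)
    (q : (Fin m → ℤ) → EReal)
    (hq : ∀ x ∈ S, ∀ᵐ ω ∂P,
      Tendsto (fun n : ℕ => ((h (n • x) ω / n : ℝ) : EReal)) atTop (nhds (q x))) :
    (∀ x ∈ S, ∀ y ∈ S, q (x + y) ≤ q x + q y) ∧
    (∀ x ∈ S, ∀ t : ℕ, 0 < t → q (t • x) = ((t : ℝ) : EReal) * q x) :=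
  stmt16_general P S hSadd f hact hmp h hhm hsub hint q hq
end
end
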